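/- arXiv:2410.22379 — 12 statements merged into one kernel-verified Lean document; each statement's English description precedes it below -/
import Mathlib

section
/- Let P and Q be finite posets, each with at least two points and without isolated points, and let f : P → Q be a surjective order-preserving map. Then there exists an order-preserving map g : P → Q such that g maps the set of minimal points of P onto the set of minimal points of Q, g maps the set of maximal points of P onto the set of maximal points of Q, and g agrees with f on all points of P that are neither minimal nor maximal. -/
open Set

/-- Minimal points of a poset. -/
def LSet (α : Type*) [PartialOrder α] : Set α := {x | ∀ y, y ≤ x → y = x}

/-- Maximal points of a poset. -/
def USet (α : Type*) [PartialOrder α] : Set α := {x | ∀ y, x ≤ y → y = x}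

/-- Extremal points. -/
def ESet (α : Type*) [PartialOrder α] : Set α := LSet α ∪ USet α

/-- Non-extremal (interior) points. -/
def MSet (α : Type*) [PartialOrder α] : Set α := (ESet α)ᶜ

/-- No isolated points: every point is comparable to some other point. -/
def NoIsolated (α : Type*) [PartialOrder α] : Prop := ∀ x : α, ∃ y : α, x < y ∨ y < x

/-- Height one: every point is extremal and some strict comparability exists. -/
def HeightOne (α : Type*) [PartialOrder α] : Prop :=
  (∀ x : α, x ∈ ESet α) ∧ ∃ x y : α, x < y

/-- A 4-crown with minimal points a, b and maximal points v, w: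
the comparabilities are exactly a<v, a<w, b<v, b<w. -/
def IsCrown {α : Type*} [PartialOrder α] (a b v w : α) : Prop :=
  a < v ∧ a < w ∧ b < v ∧ b < w ∧ ¬ a ≤ b ∧ ¬ b ≤ a ∧ ¬ v ≤ w ∧ ¬ w ≤ v

/-- The inner of a 4-crown: [a,v] ∩ [b,w]. -/
def crownInner {α : Type*} [PartialOrder α] (a b v w : α) : Set α :=
  {m | a ≤ m ∧ m ≤ v} ∩ {m | b ≤ m ∧ m ≤ w}

/-- An improper 4-crown contained in the extremal points E(P). -/
def IsImproperCrownE {α : Type*} [PartialOrder α] (a b v w : α) : Prop :=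
  IsCrown a b v w ∧ a ∈ ESet α ∧ b ∈ ESet α ∧ v ∈ ESet α ∧ w ∈ ESet α ∧
    (crownInner a b v w).Nonempty

/-- Inner points of improper 4-crowns contained in E(P). -/
def innerPts (α : Type*) [PartialOrder α] : Set α :=
  {m | ∃ a b v w : α, IsImproperCrownE a b v w ∧ m ∈ crownInner a b v w}

/-- Ξ(m): union of all improper 4-crowns with inner point m. -/
def Xi {α : Type*} [PartialOrder α] (m : α) : Set α :=
  (LSet α ∩ {x | x ≤ m}) ∪ (USet α ∩ {x | m ≤ x})

/-- 4-crown bundles: maximal sets Ξ(m) with respect to inclusion. -/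
def bundles (α : Type*) [PartialOrder α] : Set (Set α) :=
  {F | ∃ m ∈ innerPts α, F = Xi m ∧
    ∀ m' ∈ innerPts α, Xi m ⊆ Xi m' → Xi m' = Xi m}

/-- R is a retract of the poset on α. -/
def IsRetract (α : Type*) [PartialOrder α] (R : Set α) : Prop :=
  ∃ r : α → α, Monotone r ∧ (∀ x, r (r x) = r x) ∧ Set.range r = R

/-- C is a retract of the induced subposet on Y. -/
def IsRetractIn {α : Type*} [PartialOrder α] (Y C : Set α) : Prop :=
  ∃ r : Y → Y, Monotone r ∧ (∀ x, r (r x) = r x) ∧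
    Set.range r = {y : Y | (y : α) ∈ C}

/-- The comparability graph of the poset is connected. -/
def PosetConnected (α : Type*) [PartialOrder α] : Prop :=
  ∀ x y : α, Relation.ReflTransGen (fun u v => u ≤ v ∨ v ≤ u) x y

/-- Minimal points of an induced subposet. -/
def minIn {α : Type*} [PartialOrder α] (S : Set α) : Set α :=
  {x ∈ S | ∀ y ∈ S, y ≤ x → y = x}

/-- Maximal points of an induced subposet. -/
def maxIn {α : Type*} [PartialOrder α] (S : Set α) : Set α :=
  {x ∈ S | ∀ y ∈ S, x ≤ y → y = x}

/-!
Keep `f` on the interior points and push every minimal point of `P` down, and every maximal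
point up, to an extremal point of `Q` below, resp. above, its image. Monotonicity survives
because a strict relation `x < y` has `x` non-maximal and `y` non-minimal, so the new image of
`x` only moves down and that of `y` only up. Surjectivity onto `L(Q)` holds because every
`q ∈ L(Q)` is `f x`, and a minimal point `a ≤ x` of `P` must still satisfy `f a = q`. Without
isolated points no point of `P` is both minimal and maximal, so the two corrections never clash.
-/

section Extremal

variable {α : Type*} [PartialOrder α]

lemma mem_LSet_iff_isMin {x : α} : x ∈ LSet α ↔ IsMin x :=
  ⟨fun h _ hy => (h _ hy).ge, fun h _ hy => h.eq_of_le hy⟩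

lemma mem_USet_iff_isMax {x : α} : x ∈ USet α ↔ IsMax x :=
  ⟨fun h _ hy => (h _ hy).le, fun h _ hy => h.eq_of_ge hy⟩

lemma exists_mem_LSet_le [Finite α] (x : α) : ∃ a ∈ LSet α, a ≤ x := by
  obtain ⟨a, hax, ha⟩ := exists_minimal_le_of_wellFoundedLT (fun _ : α => True) x trivial
  exact ⟨a, mem_LSet_iff_isMin.2 (minimal_true.1 ha), hax⟩

lemma exists_mem_USet_ge [Finite α] (x : α) : ∃ a ∈ USet α, x ≤ a := by
  obtain ⟨a, hxa, ha⟩ := exists_maximal_ge_of_wellFoundedGT (fun _ : α => True) x trivial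
  exact ⟨a, mem_USet_iff_isMax.2 (maximal_true.1 ha), hxa⟩

lemma NoIsolated.disjoint_LSet_USet (h : NoIsolated α) : Disjoint (LSet α) (USet α) := by
  refine Set.disjoint_left.2 fun x hL hU => ?_
  obtain ⟨y, hxy | hyx⟩ := h x
  · exact hxy.ne (hU y hxy.le).symm
  · exact hyx.ne (hL y hyx.le)

variable {β : Type*} [PartialOrder β] [Finite α] {f : α → β}

lemma LSet_subset_image_LSet (hf : Monotone f) (hsurj : Function.Surjective f) :
    LSet β ⊆ f '' LSet α := by
  intro q hq
  obtain ⟨x, rfl⟩ := hsurj q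
  obtain ⟨a, ha, hax⟩ := exists_mem_LSet_le x
  exact ⟨a, ha, hq _ (hf hax)⟩

lemma USet_subset_image_USet (hf : Monotone f) (hsurj : Function.Surjective f) :
    USet β ⊆ f '' USet α := by
  intro q hq
  obtain ⟨x, rfl⟩ := hsurj q
  obtain ⟨a, ha, hxa⟩ := exists_mem_USet_ge x
  exact ⟨a, ha, hq _ (hf hxa)⟩

end Extremal

section Correction

variable {α β : Type*} [PartialOrder α]

open Classical in
noncomputable def correctExtremes (down up : β → β) (f : α → β) (x : α) : β :=
  if x ∈ LSet α then down (f x) else if x ∈ USet α then up (f x) else f x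

variable {down up : β → β} {f : α → β}

lemma correctExtremes_of_mem_LSet {x : α} (hx : x ∈ LSet α) :
    correctExtremes down up f x = down (f x) := if_pos hx

lemma correctExtremes_of_mem_USet {x : α} (hL : x ∉ LSet α) (hU : x ∈ USet α) :
    correctExtremes down up f x = up (f x) := (if_neg hL).trans (if_pos hU)

lemma correctExtremes_of_mem_MSet {x : α} (hx : x ∈ MSet α) :
    correctExtremes down up f x = f x := by
  simp only [MSet, ESet, Set.mem_compl_iff, Set.mem_union, not_or] at hx
  exact (if_neg hx.1).trans (if_neg hx.2)

variable [PartialOrder β]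

lemma correctExtremes_le (hdown : ∀ q, down q ≤ q) {x : α} (hx : x ∉ USet α) :
    correctExtremes down up f x ≤ f x := by
  unfold correctExtremes
  split_ifs
  exacts [hdown _, le_rfl]

lemma le_correctExtremes (hup : ∀ q, q ≤ up q) {x : α} (hx : x ∉ LSet α) :
    f x ≤ correctExtremes down up f x := by
  unfold correctExtremes
  split_ifs
  exacts [hup _, le_rfl]

lemma monotone_correctExtremes (hf : Monotone f) (hdown : ∀ q, down q ≤ q)
    (hup : ∀ q, q ≤ up q) : Monotone (correctExtremes down up f) := by
  intro x y hxy
  rcases hxy.eq_or_lt with rfl | hlt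
  · exact le_rfl
  have hx : x ∉ USet α := fun h => hlt.ne (h y hlt.le).symm
  have hy : y ∉ LSet α := fun h => hlt.ne' (h x hlt.le).symm
  calc correctExtremes down up f x ≤ f x := correctExtremes_le hdown hx
    _ ≤ f y := hf hxy
    _ ≤ correctExtremes down up f y := le_correctExtremes hup hy

lemma image_LSet_correctExtremes [Finite α] (hf : Monotone f) (hsurj : Function.Surjective f)
    (hdown : ∀ q, down q ≤ q) (hdownL : ∀ q, down q ∈ LSet β) :
    correctExtremes down up f '' LSet α = LSet β := by
  refine Set.Subset.antisymm ?_ fun q hq => ?_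
  · rintro _ ⟨x, hx, rfl⟩
    rw [correctExtremes_of_mem_LSet hx]
    exact hdownL _
  · obtain ⟨a, ha, rfl⟩ := LSet_subset_image_LSet hf hsurj hq
    exact ⟨a, ha, by rw [correctExtremes_of_mem_LSet ha, hq _ (hdown _)]⟩

lemma image_USet_correctExtremes [Finite α] (hα : NoIsolated α) (hf : Monotone f)
    (hsurj : Function.Surjective f) (hup : ∀ q, q ≤ up q) (hupU : ∀ q, up q ∈ USet β) :
    correctExtremes down up f '' USet α = USet β := by
  have hL : ∀ x ∈ USet α, x ∉ LSet α := fun x hx hx' =>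
    Set.disjoint_left.1 hα.disjoint_LSet_USet hx' hx
  refine Set.Subset.antisymm ?_ fun q hq => ?_
  · rintro _ ⟨x, hx, rfl⟩
    rw [correctExtremes_of_mem_USet (hL x hx) hx]
    exact hupU _
  · obtain ⟨a, ha, rfl⟩ := USet_subset_image_USet hf hsurj hq
    exact ⟨a, ha, by rw [correctExtremes_of_mem_USet (hL a ha) ha, hq _ (hup _)]⟩

end Correction

theorem stmt0_general {α β : Type*} [Fintype α] [PartialOrder α] [Fintype β] [PartialOrder β]
    (hPiso : NoIsolated α)
    (f : α → β) (hf : Monotone f) (hsurj : Function.Surjective f) :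
    ∃ g : α → β, Monotone g ∧ g '' LSet α = LSet β ∧ g '' USet α = USet β ∧
      ∀ x ∈ MSet α, g x = f x := by
  choose down hdownL hdown using fun q : β => exists_mem_LSet_le q
  choose up hupU hup using fun q : β => exists_mem_USet_ge q
  exact ⟨correctExtremes down up f, monotone_correctExtremes hf hdown hup,
    image_LSet_correctExtremes hf hsurj hdown hdownL,
    image_USet_correctExtremes hPiso hf hsurj hup hupU,
    fun _ => correctExtremes_of_mem_MSet⟩

theorem stmt0 {α β : Type*} [Fintype α] [PartialOrder α] [Fintype β] [PartialOrder β]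
    [Nontrivial α] [Nontrivial β]
    (hPiso : NoIsolated α) (hQiso : NoIsolated β)
    (f : α → β) (hf : Monotone f) (hsurj : Function.Surjective f) :
    ∃ g : α → β, Monotone g ∧ g '' LSet α = LSet β ∧ g '' USet α = USet β ∧
      ∀ x ∈ MSet α, g x = f x :=
  stmt0_general hPiso f hf hsurj
end

section
/- Let P and Q be finite posets without isolated points, with Q an induced subposet of P, and let f : P → Q be a retraction (an idempotent order-preserving surjection onto Q). Then there exists a retraction g : P → Q with g[L(P)] = L(Q), g[U(P)] = U(Q), and g agreeing with f on M(P). -/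
open Set

/-!
Let `g` agree with `f` on the interior points, send each minimal point `x` to a minimal point of
`Q` below `f x`, and each maximal point `x` to a maximal point of `Q` above `f x`. Points of `Q`
stay fixed, since an extremal point of `P` lying in `Q` is already extremal in `Q`. Monotonicity
only has to be checked along `x < y`, where `x` is not maximal and `y` is not minimal, so that
`g x ≤ f x ≤ f y ≤ g y`. Every minimal point `q` of `Q` is hit by any minimal point `a ≤ q` of
`P`, since `g a ≤ f a ≤ f q = q`, and dually for maximal points; without isolated points no
maximal point is also minimal, so all maximal points are sent to maximal points of `Q`.
-/

section

variable {α : Type*} [PartialOrder α]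

theorem LSet_eq : LSet α = {x | IsMin x} :=
  ext fun _ => ⟨fun h _ hy => (h _ hy).ge, fun h _ hy => h.eq_of_le hy⟩

theorem USet_eq : USet α = {x | IsMax x} :=
  ext fun _ => ⟨fun h _ hy => (h _ hy).le, fun h _ hy => h.eq_of_ge hy⟩

theorem minIn_eq (S : Set α) : minIn S = {x | Minimal (· ∈ S) x} :=
  ext fun _ => ⟨fun h => ⟨h.1, fun _ hy hyx => (h.2 _ hy hyx).ge⟩,
    fun h => ⟨h.1, fun _ hy hyx => h.eq_of_le hy hyx⟩⟩

theorem maxIn_eq (S : Set α) : maxIn S = {x | Maximal (· ∈ S) x} :=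
  ext fun _ => ⟨fun h => ⟨h.1, fun _ hy hxy => (h.2 _ hy hxy).le⟩,
    fun h => ⟨h.1, fun _ hy hxy => h.eq_of_ge hy hxy⟩⟩

theorem not_isMin_and_not_isMax_of_mem_MSet {x : α} (hx : x ∈ MSet α) :
    ¬IsMin x ∧ ¬IsMax x := by
  simpa [MSet, ESet, LSet_eq, USet_eq, not_or] using hx

theorem NoIsolated.not_isMin_of_isMax (h : NoIsolated α) {x : α} (hx : IsMax x) : ¬IsMin x := by
  intro hx'
  obtain ⟨y, hxy | hyx⟩ := h x
  · exact hx.not_lt hxy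
  · exact hx'.not_lt hyx

open Classical in
noncomputable def redirectExtremal (lo hi f : α → α) (x : α) : α :=
  if IsMin x then lo x else if IsMax x then hi x else f x

variable {Q : Set α} {lo hi f : α → α}

theorem redirectExtremal_of_isMin {x : α} (hx : IsMin x) : redirectExtremal lo hi f x = lo x :=
  if_pos hx

theorem redirectExtremal_of_isMax {x : α} (hx : IsMax x) (hx' : ¬IsMin x) :
    redirectExtremal lo hi f x = hi x := by
  rw [redirectExtremal, if_neg hx', if_pos hx]

theorem redirectExtremal_of_not_isMin_of_not_isMax {x : α} (hx : ¬IsMin x) (hx' : ¬IsMax x) :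
    redirectExtremal lo hi f x = f x := by
  rw [redirectExtremal, if_neg hx, if_neg hx']

theorem redirectExtremal_le (hlo : ∀ x, lo x ≤ f x) {x : α} (hx : ¬IsMax x) :
    redirectExtremal lo hi f x ≤ f x := by
  by_cases hmin : IsMin x
  · exact (redirectExtremal_of_isMin hmin).trans_le (hlo x)
  · exact (redirectExtremal_of_not_isMin_of_not_isMax hmin hx).le

theorem le_redirectExtremal (hhi : ∀ x, f x ≤ hi x) {x : α} (hx : ¬IsMin x) :
    f x ≤ redirectExtremal lo hi f x := by
  by_cases hmax : IsMax x
  · exact (hhi x).trans_eq (redirectExtremal_of_isMax hmax hx).symm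
  · exact (redirectExtremal_of_not_isMin_of_not_isMax hx hmax).ge

theorem monotone_redirectExtremal (hf : Monotone f) (hlo : ∀ x, lo x ≤ f x)
    (hhi : ∀ x, f x ≤ hi x) : Monotone (redirectExtremal lo hi f) :=
  monotone_iff_forall_lt.2 fun _ _ hxy =>
    calc redirectExtremal lo hi f _ ≤ f _ := redirectExtremal_le hlo (not_isMax_of_lt hxy)
      _ ≤ f _ := hf hxy.le
      _ ≤ redirectExtremal lo hi f _ := le_redirectExtremal hhi (not_isMin_of_lt hxy)

theorem redirectExtremal_mem (hfQ : ∀ x, f x ∈ Q) (hloQ : ∀ x, lo x ∈ Q) (hhiQ : ∀ x, hi x ∈ Q)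
    (x : α) : redirectExtremal lo hi f x ∈ Q := by
  unfold redirectExtremal
  split_ifs
  exacts [hloQ x, hhiQ x, hfQ x]

theorem redirectExtremal_eq_self (hfix : ∀ q ∈ Q, f q = q) (hlo : ∀ x, lo x ≤ f x)
    (hhi : ∀ x, f x ≤ hi x) {q : α} (hq : q ∈ Q) : redirectExtremal lo hi f q = q := by
  by_cases hmin : IsMin q
  · rw [redirectExtremal_of_isMin hmin]
    exact hmin.eq_of_le ((hlo q).trans_eq (hfix q hq))
  · by_cases hmax : IsMax q
    · rw [redirectExtremal_of_isMax hmax hmin]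
      exact hmax.eq_of_ge ((hfix q hq).symm.trans_le (hhi q))
    · rw [redirectExtremal_of_not_isMin_of_not_isMax hmin hmax, hfix q hq]

theorem image_redirectExtremal_isMin [Finite α] (hf : Monotone f) (hfix : ∀ q ∈ Q, f q = q)
    (hlo : ∀ x, lo x ≤ f x ∧ Minimal (· ∈ Q) (lo x)) :
    redirectExtremal lo hi f '' {x | IsMin x} = {q | Minimal (· ∈ Q) q} := by
  refine Subset.antisymm ?_ fun q hq => ?_
  · rintro _ ⟨x, hx, rfl⟩
    rw [redirectExtremal_of_isMin hx]
    exact (hlo x).2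
  · obtain ⟨a, haq, hmin⟩ := Finite.exists_le_minimal (p := fun _ : α => True) (a := q) trivial
    have ha : IsMin a := minimal_true.1 hmin
    refine ⟨a, ha, ?_⟩
    rw [redirectExtremal_of_isMin ha]
    exact hq.eq_of_le (hlo a).2.1 ((hlo a).1.trans ((hf haq).trans_eq (hfix q hq.1)))

theorem image_redirectExtremal_isMax [Finite α] (hiso : NoIsolated α) (hf : Monotone f)
    (hfix : ∀ q ∈ Q, f q = q) (hhi : ∀ x, f x ≤ hi x ∧ Maximal (· ∈ Q) (hi x)) :
    redirectExtremal lo hi f '' {x | IsMax x} = {q | Maximal (· ∈ Q) q} := by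
  refine Subset.antisymm ?_ fun q hq => ?_
  · rintro _ ⟨x, hx, rfl⟩
    rw [redirectExtremal_of_isMax hx (hiso.not_isMin_of_isMax hx)]
    exact (hhi x).2
  · obtain ⟨a, hqa, hmax⟩ := Finite.exists_le_maximal (p := fun _ : α => True) (a := q) trivial
    have ha : IsMax a := maximal_true.1 hmax
    refine ⟨a, ha, ?_⟩
    rw [redirectExtremal_of_isMax ha (hiso.not_isMin_of_isMax ha)]
    exact hq.eq_of_ge (hhi a).2.1 (((hfix q hq.1).symm.trans_le (hf hqa)).trans (hhi a).1)

end

theorem stmt1_general {α : Type*} [Fintype α] [PartialOrder α]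
    (hPiso : NoIsolated α) (Q : Set α)
    (f : α → α) (hf : Monotone f) (hidem : ∀ x, f (f x) = f x)
    (hran : Set.range f = Q) :
    ∃ g : α → α, Monotone g ∧ (∀ x, g (g x) = g x) ∧ Set.range g = Q ∧
      g '' LSet α = minIn Q ∧ g '' USet α = maxIn Q ∧
      ∀ x ∈ MSet α, g x = f x := by
  have hfQ : ∀ x, f x ∈ Q := fun x => hran ▸ mem_range_self x
  have hfix : ∀ q ∈ Q, f q = q := by
    rintro _ hq
    obtain ⟨x, rfl⟩ := hran ▸ hq
    exact hidem x
  choose lo hlo using fun x => (toFinite Q).exists_le_minimal (hfQ x)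
  choose hi hhi using fun x => (toFinite Q).exists_le_maximal (hfQ x)
  have hlo_le : ∀ x, lo x ≤ f x := fun x => (hlo x).1
  have hle_hi : ∀ x, f x ≤ hi x := fun x => (hhi x).1
  have hgQ := redirectExtremal_mem hfQ (fun x => (hlo x).2.1) (fun x => (hhi x).2.1)
  have hgfix : ∀ q ∈ Q, redirectExtremal lo hi f q = q :=
    fun _ => redirectExtremal_eq_self hfix hlo_le hle_hi
  refine ⟨redirectExtremal lo hi f, monotone_redirectExtremal hf hlo_le hle_hi,
    fun x => hgfix _ (hgQ x), ?_, ?_, ?_, fun x hx => ?_⟩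
  · exact Subset.antisymm (range_subset_iff.2 hgQ) fun q hq => ⟨q, hgfix q hq⟩
  · rw [LSet_eq, minIn_eq]
    exact image_redirectExtremal_isMin hf hfix hlo
  · rw [USet_eq, maxIn_eq]
    exact image_redirectExtremal_isMax hPiso hf hfix hhi
  · obtain ⟨hmin, hmax⟩ := not_isMin_and_not_isMax_of_mem_MSet hx
    exact redirectExtremal_of_not_isMin_of_not_isMax hmin hmax

theorem stmt1 {α : Type*} [Fintype α] [PartialOrder α]
    (hPiso : NoIsolated α) (Q : Set α)
    (hQiso : ∀ x ∈ Q, ∃ y ∈ Q, x < y ∨ y < x)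
    (f : α → α) (hf : Monotone f) (hidem : ∀ x, f (f x) = f x)
    (hran : Set.range f = Q) :
    ∃ g : α → α, Monotone g ∧ (∀ x, g (g x) = g x) ∧ Set.range g = Q ∧
      g '' LSet α = minIn Q ∧ g '' USet α = maxIn Q ∧
      ∀ x ∈ MSet α, g x = f x :=
  stmt1_general hPiso Q f hf hidem hran
end

section
/- Let P be a finite poset and Q a finite poset of height one (every point is minimal or maximal, and some edge exists). Let f : E(P) → Q be an order-preserving map from the induced subposet on the extremal points E(P) = L(P) ∪ U(P) of P. For x ∈ P define α(x) = f[L(P) ∩ ↓x] and β(x) = f[U(P) ∩ ↑x]. Suppose that for every x ∈ P with α(x) ∩ β(x) = ∅: if α(x) has at least 2 elements then β(x) has exactly 1 element, and if β(x) has at least 2 elements then α(x) has exactly 1 element. Then there exists an order-preserving map g : P → Q with g restricted to E(P) equal to f. -/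
/-!
Write `α(x)` and `β(x)` for the images under `f` of the minimal points below `x` and the maximal
points above `x`. Both are nonempty, `α` grows and `β` shrinks along `≤`, and every element of
`α(x)` lies below every element of `β(y)` when `x ≤ y`. So `g x` may be taken in `α(x) ∩ β(x)`
when that is nonempty; otherwise the hypothesis forces `α(x)` or `β(x)` to be a singleton, and
`g x` is taken to be its element, preferring `α(x)` unless `x` is maximal. Monotonicity then
reduces to these three facts about `α` and `β`.
-/

open Set

section

variable {α β : Type*} [PartialOrder α] (f : α → β)

def imgBelow (x : α) : Set β := f '' (LSet α ∩ Iic x)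

def imgAbove (x : α) : Set β := f '' (USet α ∩ Ici x)

variable {f}

theorem imgBelow_mono : Monotone (imgBelow f) := by
  rintro x y hxy _ ⟨a, ⟨haL, hax⟩, rfl⟩
  exact ⟨a, ⟨haL, le_trans hax hxy⟩, rfl⟩

theorem imgAbove_anti : Antitone (imgAbove f) := by
  rintro x y hxy _ ⟨u, ⟨huU, hyu⟩, rfl⟩
  exact ⟨u, ⟨huU, le_trans hxy hyu⟩, rfl⟩

theorem imgBelow_of_mem_LSet {x : α} (hx : x ∈ LSet α) : imgBelow f x = {f x} := by
  refine Subset.antisymm ?_ (singleton_subset_iff.2 ⟨x, ⟨hx, le_rfl⟩, rfl⟩)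
  rintro _ ⟨a, ⟨-, hax⟩, rfl⟩
  rw [hx a hax, mem_singleton_iff]

theorem imgAbove_of_mem_USet {x : α} (hx : x ∈ USet α) : imgAbove f x = {f x} := by
  refine Subset.antisymm ?_ (singleton_subset_iff.2 ⟨x, ⟨hx, le_rfl⟩, rfl⟩)
  rintro _ ⟨u, ⟨-, hxu⟩, rfl⟩
  rw [hx u hxu, mem_singleton_iff]

theorem imgBelow_nonempty [Finite α] (x : α) : (imgBelow f x).Nonempty := by
  obtain ⟨a, hax, ha⟩ := Finite.exists_le_minimal (p := fun _ => True) (a := x) trivial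
  exact ⟨f a, a, ⟨fun y hy => ((minimal_true.1 ha).eq_of_ge hy).symm, hax⟩, rfl⟩

theorem imgAbove_nonempty [Finite α] (x : α) : (imgAbove f x).Nonempty := by
  obtain ⟨u, hxu, hu⟩ := Finite.exists_le_maximal (p := fun _ => True) (a := x) trivial
  exact ⟨f u, u, ⟨fun y hy => ((maximal_true.1 hu).eq_of_le hy).symm, hxu⟩, rfl⟩

variable (f) in
/-- The values allowed for `g x`. The first clause is what `g x ≤ g y` needs from the smaller
point `x`, the second what it needs from the larger point `y`. -/
def IsAdmissibleValue (x : α) (b : β) : Prop :=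
  (x ∉ USet α → b ∈ imgBelow f x ∨ (2 ≤ (imgBelow f x).ncard ∧ imgAbove f x = {b})) ∧
    (b ∈ imgAbove f x ∨ (x ∉ USet α ∧ imgBelow f x = {b}))

theorem IsAdmissibleValue.eq_of_mem_ESet {x : α} {b : β} (hb : IsAdmissibleValue f x b)
    (hx : x ∈ ESet α) : b = f x := by
  by_cases hxU : x ∈ USet α
  · rcases hb.2 with hbB | ⟨hxU', -⟩
    · rwa [imgAbove_of_mem_USet hxU] at hbB
    · exact absurd hxU hxU'
  · have hA := imgBelow_of_mem_LSet (f := f) (hx.resolve_right hxU)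
    rcases hb.1 hxU with hbA | ⟨h2, -⟩
    · rwa [hA] at hbA
    · rw [hA, ncard_singleton] at h2
      omega

theorem exists_isAdmissibleValue [Finite α] (x : α)
    (hx : imgBelow f x ∩ imgAbove f x = ∅ →
      2 ≤ (imgBelow f x).ncard → (imgAbove f x).ncard = 1) :
    ∃ b, IsAdmissibleValue f x b := by
  by_cases hxU : x ∈ USet α
  · obtain ⟨b, hb⟩ := imgAbove_nonempty (f := f) x
    exact ⟨b, fun h => absurd hxU h, Or.inl hb⟩
  by_cases hAB : (imgBelow f x ∩ imgAbove f x).Nonempty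
  · obtain ⟨b, hbA, hbB⟩ := hAB
    exact ⟨b, fun _ => Or.inl hbA, Or.inl hbB⟩
  by_cases hA1 : (imgBelow f x).ncard = 1
  · obtain ⟨a, ha⟩ := ncard_eq_one.1 hA1
    exact ⟨a, fun _ => Or.inl (ha ▸ rfl), Or.inr ⟨hxU, ha⟩⟩
  have hA2 : 2 ≤ (imgBelow f x).ncard := by
    have := (ncard_pos (s := imgBelow f x) ((toFinite _).image f)).2 (imgBelow_nonempty (f := f) x)
    omega
  obtain ⟨b, hb⟩ := ncard_eq_one.1 (hx (not_nonempty_iff_eq_empty.1 hAB) hA2)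
  exact ⟨b, fun _ => Or.inr ⟨hA2, hb⟩, Or.inl (hb ▸ rfl)⟩

variable [PartialOrder β]

theorem le_of_mem_imgBelow_of_mem_imgAbove
    (hf : ∀ x ∈ ESet α, ∀ y ∈ ESet α, x ≤ y → f x ≤ f y) {x y : α} (hxy : x ≤ y) {p q : β}
    (hp : p ∈ imgBelow f x) (hq : q ∈ imgAbove f y) : p ≤ q := by
  obtain ⟨a, ⟨haL, hax⟩, rfl⟩ := hp
  obtain ⟨u, ⟨huU, hyu⟩, rfl⟩ := hq
  exact hf a (Or.inl haL) u (Or.inr huU) (hax.trans (hxy.trans hyu))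

theorem monotone_of_isAdmissibleValue [Finite α]
    (hf : ∀ x ∈ ESet α, ∀ y ∈ ESet α, x ≤ y → f x ≤ f y) {g : α → β}
    (hg : ∀ x, IsAdmissibleValue f x (g x)) : Monotone g := by
  intro x y hxy
  by_cases hxU : x ∈ USet α
  · rw [hxU y hxy]
  rcases (hg x).1 hxU, (hg y).2 with ⟨hxA | ⟨hA2, hxB⟩, hyB | ⟨-, hyA⟩⟩
  · exact le_of_mem_imgBelow_of_mem_imgAbove hf hxy hxA hyB
  · have := imgBelow_mono hxy hxA
    rw [hyA, mem_singleton_iff] at this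
    exact this.le
  · have := imgAbove_anti hxy hyB
    rw [hxB, mem_singleton_iff] at this
    exact this.ge
  · have := ncard_le_ncard (imgBelow_mono hxy) ((toFinite _).image f)
    rw [hyA, ncard_singleton] at this
    omega

end

theorem stmt2_general {α β : Type*} [Fintype α] [PartialOrder α] [PartialOrder β]
    (f : α → β) (hf : ∀ x ∈ ESet α, ∀ y ∈ ESet α, x ≤ y → f x ≤ f y)
    (hcond : ∀ x : α,
      (f '' (LSet α ∩ {z | z ≤ x})) ∩ (f '' (USet α ∩ {z | x ≤ z})) = ∅ →
      (2 ≤ (f '' (LSet α ∩ {z | z ≤ x})).ncard →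
        (f '' (USet α ∩ {z | x ≤ z})).ncard = 1) ∧
      (2 ≤ (f '' (USet α ∩ {z | x ≤ z})).ncard →
        (f '' (LSet α ∩ {z | z ≤ x})).ncard = 1)) :
    ∃ g : α → β, Monotone g ∧ ∀ x ∈ ESet α, g x = f x := by
  choose g hg using fun x => exists_isAdmissibleValue (f := f) x fun h => (hcond x h).1
  exact ⟨g, monotone_of_isAdmissibleValue hf hg, fun x hx => (hg x).eq_of_mem_ESet hx⟩

theorem stmt2 {α β : Type*} [Fintype α] [PartialOrder α] [Fintype β] [PartialOrder β]
    (hPiso : NoIsolated α) (hQ : HeightOne β)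
    (f : α → β) (hf : ∀ x ∈ ESet α, ∀ y ∈ ESet α, x ≤ y → f x ≤ f y)
    (hcond : ∀ x : α,
      (f '' (LSet α ∩ {z | z ≤ x})) ∩ (f '' (USet α ∩ {z | x ≤ z})) = ∅ →
      (2 ≤ (f '' (LSet α ∩ {z | z ≤ x})).ncard →
        (f '' (USet α ∩ {z | x ≤ z})).ncard = 1) ∧
      (2 ≤ (f '' (USet α ∩ {z | x ≤ z})).ncard →
        (f '' (LSet α ∩ {z | z ≤ x})).ncard = 1)) :
    ∃ g : α → β, Monotone g ∧ ∀ x ∈ ESet α, g x = f x :=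
  stmt2_general f hf hcond
end

section
/- Let P be a finite poset and C ⊆ P an improper 4-crown (a 4-crown whose inner 𝒥_P(C) is nonempty). Then C is not a retract of P. -/
open Set

theorem IsCrown.disjoint_crownInner {α : Type*} [PartialOrder α] {a b v w : α}
    (h : IsCrown a b v w) : Disjoint ({a, b, v, w} : Set α) (crownInner a b v w) := by
  obtain ⟨-, -, -, -, hab, hba, hvw, hwv⟩ := h
  rw [Set.disjoint_left]
  rintro x (rfl | rfl | rfl | rfl) ⟨⟨hax, hxv⟩, hbx, hxw⟩
  · exact hba hbx
  · exact hab hax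
  · exact hvw hxw
  · exact hwv hxv

theorem Monotone.mapsTo_crownInner {α : Type*} [PartialOrder α] {a b v w : α} {r : α → α}
    (hr : Monotone r) (ha : r a = a) (hb : r b = b) (hv : r v = v) (hw : r w = w) :
    MapsTo r (crownInner a b v w) (crownInner a b v w) := by
  rintro m ⟨⟨ham, hmv⟩, hbm, hmw⟩
  exact ⟨⟨ha ▸ hr ham, hv ▸ hr hmv⟩, hb ▸ hr hbm, hw ▸ hr hmw⟩

theorem IsRetract.exists_retraction {α : Type*} [PartialOrder α] {R : Set α}
    (h : IsRetract α R) : ∃ r : α → α, Monotone r ∧ (∀ x ∈ R, r x = x) ∧ ∀ x, r x ∈ R := by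
  obtain ⟨r, hmono, hidem, rfl⟩ := h
  exact ⟨r, hmono, by rintro _ ⟨y, rfl⟩; exact hidem y, mem_range_self⟩

theorem stmt5_general {α : Type*} [PartialOrder α] (a b v w : α)
    (h : IsCrown a b v w) (hin : (crownInner a b v w).Nonempty) :
    ¬ IsRetract α {a, b, v, w} := by
  intro hret
  obtain ⟨r, hmono, hfix, hmaps⟩ := hret.exists_retraction
  obtain ⟨m, hm⟩ := hin
  have hrm : r m ∈ crownInner a b v w :=
    hmono.mapsTo_crownInner (hfix a (by simp)) (hfix b (by simp)) (hfix v (by simp))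
      (hfix w (by simp)) hm
  exact Set.disjoint_left.mp h.disjoint_crownInner (hmaps m) hrm

theorem stmt5 {α : Type*} [Fintype α] [PartialOrder α] (a b v w : α)
    (h : IsCrown a b v w) (hin : (crownInner a b v w).Nonempty) :
    ¬ IsRetract α {a, b, v, w} :=
  stmt5_general a b v w h hin
end

section
/- Let P be a finite poset of height one (no isolated points) and let C ⊆ P be a 4-crown contained in P. Then C is a retract of P. -/
open Set

theorem stmt6 {α : Type*} [Fintype α] [PartialOrder α]
    (hht : HeightOne α) (hiso : NoIsolated α) (a b v w : α)
    (h : IsCrown a b v w) :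
    IsRetract α {a, b, v, w} := by
  classical
  obtain ⟨hav, haw, hbv, hbw, hab, hba, hvw, hwv⟩ := h
  have hE := hht.1
  have haL : a ∈ LSet α := by
    rcases hE a with h' | h'
    · exact h'
    · exact absurd (h' v hav.le) hav.ne'
  have hbL : b ∈ LSet α := by
    rcases hE b with h' | h'
    · exact h'
    · exact absurd (h' v hbv.le) hbv.ne'
  have hvL : v ∉ LSet α := fun h' => hav.ne (h' a hav.le)
  have hwL : w ∉ LSet α := fun h' => haw.ne (h' a haw.le)
  have hvw' : v ≠ w := fun h' => hvw (le_of_eq h')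
  have hab' : a ≠ b := fun h' => hab (le_of_eq h')
  set r : α → α := fun x =>
    if x ∈ LSet α then (if x = b then b else a) else (if x = w then w else v) with hr
  have hfix : ∀ x, r x = x → r (r x) = r x := fun x hx => by rw [hx, hx]
  have hra : r a = a := by simp [hr, haL, hab']
  have hrb : r b = b := by simp [hr, hbL]
  have hrv : r v = v := by simp [hr, hvL, hvw']
  have hrw : r w = w := by simp [hr, hwL]
  refine ⟨r, ?_, ?_, ?_⟩
  · intro x y hxy
    rcases eq_or_lt_of_le hxy with rfl | hlt
    · exact le_rfl
    · have hxL : x ∈ LSet α := by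
        rcases hE x with h' | h'
        · exact h'
        · exact absurd (h' y hlt.le) (ne_of_gt hlt)
      have hyL : y ∉ LSet α := fun h' => hlt.ne (h' x hlt.le)
      have h1 : r x = a ∨ r x = b := by
        simp only [hr]
        rw [if_pos hxL]
        split
        · exact Or.inr rfl
        · exact Or.inl rfl
      have h2 : r y = v ∨ r y = w := by
        simp only [hr]
        rw [if_neg hyL]
        split
        · exact Or.inr rfl
        · exact Or.inl rfl
      rcases h1 with h1 | h1 <;> rcases h2 with h2 | h2 <;> rw [h1, h2]
      exacts [hav.le, haw.le, hbv.le, hbw.le]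
  · intro x
    by_cases hx : x ∈ LSet α
    · by_cases hxb : x = b
      · simp [hr, hx, hxb, hbL]
      · simp [hr, hx, hxb, haL, hab']
    · by_cases hxw : x = w
      · simp [hr, hx, hxw, hwL]
      · simp [hr, hx, hxw, hvL, hvw']
  · ext z
    simp only [Set.mem_range, Set.mem_insert_iff, Set.mem_singleton_iff]
    constructor
    · rintro ⟨x, rfl⟩
      by_cases hx : x ∈ LSet α
      · by_cases hx2 : x = b
        · right; left; simp [hr, hx2, hbL]
        · left; simp [hr, hx, hx2]
      · by_cases hx3 : x = w
        · right; right; right; simp [hr, hx3, hwL]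
        · right; right; left; simp [hr, hx, hx3]
    · rintro (rfl | rfl | rfl | rfl)
      exacts [⟨_, hra⟩, ⟨_, hrb⟩, ⟨_, hrv⟩, ⟨_, hrw⟩]
end

section
/- Let P be a finite poset of height one without isolated points, and let C ⊆ P be an induced subposet that is an ordinal sum A ⊕ B of two nonempty antichains A ⊆ L(P), B ⊆ U(P) (so the relations in C are exactly A × B). Then C is a retract of P. -/
open Set

theorem stmt7 {α : Type*} [Fintype α] [PartialOrder α]
    (hht : HeightOne α) (hiso : NoIsolated α)
    (A B : Set α) (hA : A.Nonempty) (hB : B.Nonempty)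
    (hAL : A ⊆ LSet α) (hBU : B ⊆ USet α)
    (hAB : ∀ a ∈ A, ∀ b ∈ B, a < b) :
    IsRetract α (A ∪ B) := by
  classical
  obtain ⟨a₀, ha₀⟩ := hA
  obtain ⟨b₀, hb₀⟩ := hB
  refine ⟨fun x => if x ∈ A ∪ B then x else if x ∈ LSet α then a₀ else b₀, ?_, ?_, ?_⟩
  · intro x y hxy
    rcases hxy.lt_or_eq with hlt | rfl
    · have hxL : x ∈ LSet α := by
        rcases hht.1 x with h | h
        · exact h
        · exact absurd (h y hlt.le) hlt.ne'
      have hyU : y ∈ USet α := by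
        rcases hht.1 y with h | h
        · exact absurd (h x hlt.le) hlt.ne
        · exact h
      have hyL : y ∉ LSet α := fun h => hlt.ne (h x hlt.le)
      simp only
      by_cases hx : x ∈ A ∪ B
      · have hxA : x ∈ A := by
          rcases hx with h | h
          · exact h
          · exact absurd (hBU h y hlt.le) hlt.ne'
        rw [if_pos hx]
        by_cases hy : y ∈ A ∪ B
        · rw [if_pos hy]; exact hlt.le
        · rw [if_neg hy, if_neg hyL]
          exact (hAB x hxA b₀ hb₀).le
      · rw [if_neg hx, if_pos hxL]
        by_cases hy : y ∈ A ∪ B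
        · have hyB : y ∈ B := by
            rcases hy with h | h
            · exact absurd (hAL h x hlt.le) hlt.ne
            · exact h
          rw [if_pos hy]
          exact (hAB a₀ ha₀ y hyB).le
        · rw [if_neg hy, if_neg hyL]
          exact (hAB a₀ ha₀ b₀ hb₀).le
    · exact le_refl _
  · have hmem : ∀ x, (if x ∈ A ∪ B then x else if x ∈ LSet α then a₀ else b₀) ∈ A ∪ B := by
      intro x
      by_cases hx : x ∈ A ∪ B
      · rwa [if_pos hx]
      · rw [if_neg hx]
        by_cases hxL : x ∈ LSet α
        · rw [if_pos hxL]; exact Or.inl ha₀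
        · rw [if_neg hxL]; exact Or.inr hb₀
    intro x
    simp only
    rw [if_pos (hmem x)]
  · have hmem : ∀ x, (if x ∈ A ∪ B then x else if x ∈ LSet α then a₀ else b₀) ∈ A ∪ B := by
      intro x
      by_cases hx : x ∈ A ∪ B
      · rwa [if_pos hx]
      · rw [if_neg hx]
        by_cases hxL : x ∈ LSet α
        · rw [if_pos hxL]; exact Or.inl ha₀
        · rw [if_neg hxL]; exact Or.inr hb₀
    ext z
    constructor
    · rintro ⟨x, rfl⟩
      exact hmem x
    · intro hz
      exact ⟨z, by simp only [if_pos hz]⟩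
end

section
/- Let P be a finite poset and C a connected finite poset of height one such that there exists a surjective order-preserving map f : P → C. Define 𝒞_imp(P) as the set of improper 4-crowns contained in E(P), ℳ(P) as the union of their inners, Ξ(m) = (L(P) ∩ ↓m) ∪ (U(P) ∩ ↑m) for m ∈ ℳ(P), and ℱ(P) as the maximal such sets Ξ(m) under inclusion (the 4-crown bundles). Then there exists an order-preserving map g : P → C with g[L(P)] = L(C) and g[U(P)] = U(C) such that for every 4-crown bundle F ∈ ℱ(P), the image g[F] does not contain two distinct points of L(C) and two distinct points of U(C) simultaneously. -/
open Set

/-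
The map `g` is `f` with every minimal point of `P` pushed down to a minimal point of `C` below
its `f`-image and every maximal point pushed up to a maximal point above it; since the
comparabilities `x < y` only involve a non-maximal `x` and a non-minimal `y`, this stays monotone.
Given `m` with `f m` minimal (height one makes `f m` extremal), every minimal point of `Ξ(m)`
lies below `m`, so its image lies below `f m` and equals it; every maximal point lies above `m`,
so its image lies above `f m`, and if that image is minimal it equals `f m` too. Hence `g[Ξ(m)]`
contains only one minimal point of `C`, and dually when `f m` is maximal.
-/

section Extremal

variable {α β : Type*} [PartialOrder α] [PartialOrder β]

lemma exists_le_mem_LSet [Finite α] (x : α) : ∃ l ≤ x, l ∈ LSet α := by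
  obtain ⟨l, hlx, hl⟩ := Finite.exists_le_minimal (p := fun _ : α => True) trivial
  exact ⟨l, hlx, fun y hy => le_antisymm hy (hl.2 trivial hy)⟩

lemma exists_ge_mem_USet [Finite α] (x : α) : ∃ u ≥ x, u ∈ USet α := by
  obtain ⟨u, hxu, hu⟩ := Finite.exists_le_maximal (p := fun _ : α => True) trivial
  exact ⟨u, hxu, fun y hy => le_antisymm (hu.2 trivial hy) hy⟩

lemma notMem_USet_of_mem_LSet (hiso : NoIsolated α) {x : α} (hx : x ∈ LSet α) :
    x ∉ USet α := by
  intro hxU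
  obtain ⟨y, hxy | hyx⟩ := hiso x
  · exact hxy.ne (hxU y hxy.le).symm
  · exact hyx.ne (hx y hyx.le)

lemma Monotone.of_le_off_USet_of_ge_off_LSet {f g : α → β} (hf : Monotone f)
    (hle : ∀ x ∉ USet α, g x ≤ f x) (hge : ∀ x ∉ LSet α, f x ≤ g x) : Monotone g := by
  intro x y hxy
  rcases hxy.eq_or_lt with rfl | hlt
  · exact le_rfl
  have hxU : x ∉ USet α := fun hx => hlt.ne' (hx y hxy)
  have hyL : y ∉ LSet α := fun hy => hlt.ne (hy x hxy)
  exact (hle x hxU).trans ((hf hxy).trans (hge y hyL))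

lemma exists_monotone_push_extremal [Finite β] (hiso : NoIsolated α) {f : α → β}
    (hf : Monotone f) :
    ∃ g : α → β, Monotone g ∧ (∀ x ∈ LSet α, g x ≤ f x ∧ g x ∈ LSet β) ∧
      ∀ x ∈ USet α, f x ≤ g x ∧ g x ∈ USet β := by
  classical
  choose dn hdn_le hdn_L using exists_le_mem_LSet (α := β)
  choose up hup_ge hup_U using exists_ge_mem_USet (α := β)
  let g : α → β := fun x =>
    if x ∈ LSet α then dn (f x) else if x ∈ USet α then up (f x) else f x
  have hgL : ∀ x ∈ LSet α, g x = dn (f x) := fun x hx => if_pos hx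
  have hgU : ∀ x ∈ USet α, g x = up (f x) := fun x hx => by
    simp only [g, if_neg (notMem_USet_of_mem_LSet hiso · hx), if_pos hx]
  have hgM : ∀ x ∉ LSet α, x ∉ USet α → g x = f x := fun x hxL hxU => by
    simp only [g, if_neg hxL, if_neg hxU]
  have hle : ∀ x ∉ USet α, g x ≤ f x := fun x hxU => by
    by_cases hxL : x ∈ LSet α
    · exact hgL x hxL ▸ hdn_le _
    · exact (hgM x hxL hxU).le
  have hge : ∀ x ∉ LSet α, f x ≤ g x := fun x hxL => by
    by_cases hxU : x ∈ USet α
    · exact hgU x hxU ▸ hup_ge _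
    · exact (hgM x hxL hxU).ge
  refine ⟨g, hf.of_le_off_USet_of_ge_off_LSet hle hge, fun x hx => ?_, fun x hx => ?_⟩
  · exact hgL x hx ▸ ⟨hdn_le _, hdn_L _⟩
  · exact hgU x hx ▸ ⟨hup_ge _, hup_U _⟩

lemma image_LSet_eq [Finite α] {f g : α → β} (hf : Monotone f)
    (hsurj : Function.Surjective f) (hg : ∀ x ∈ LSet α, g x ≤ f x ∧ g x ∈ LSet β) :
    g '' LSet α = LSet β := by
  refine Subset.antisymm (image_subset_iff.2 fun x hx => (hg x hx).2) fun c hc => ?_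
  obtain ⟨x, rfl⟩ := hsurj c
  obtain ⟨l, hlx, hl⟩ := exists_le_mem_LSet x
  exact ⟨l, hl, hc _ ((hg l hl).1.trans (hf hlx))⟩

lemma image_USet_eq [Finite α] {f g : α → β} (hf : Monotone f)
    (hsurj : Function.Surjective f) (hg : ∀ x ∈ USet α, f x ≤ g x ∧ g x ∈ USet β) :
    g '' USet α = USet β := by
  refine Subset.antisymm (image_subset_iff.2 fun x hx => (hg x hx).2) fun c hc => ?_
  obtain ⟨x, rfl⟩ := hsurj c
  obtain ⟨u, hxu, hu⟩ := exists_ge_mem_USet x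
  exact ⟨u, hu, hc _ ((hf hxu).trans (hg u hu).1)⟩

lemma image_Xi_inter_LSet_subsingleton {f g : α → β} (hf : Monotone f)
    (hgL : ∀ x ∈ LSet α, g x ≤ f x) (hgU : ∀ x ∈ USet α, f x ≤ g x) {m : α}
    (hm : f m ∈ LSet β) :
    (g '' Xi m ∩ LSet β).Subsingleton := by
  suffices h : ∀ x ∈ Xi m, g x ∈ LSet β → g x = f m by
    rintro _ ⟨⟨x, hx, rfl⟩, hxL⟩ _ ⟨⟨y, hy, rfl⟩, hyL⟩
    exact (h x hx hxL).trans (h y hy hyL).symm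
  rintro x (⟨hxL, hxm⟩ | ⟨hxU, hmx⟩) hgx
  · exact hm _ ((hgL x hxL).trans (hf hxm))
  · exact (hgx _ ((hf hmx).trans (hgU x hxU))).symm

lemma image_Xi_inter_USet_subsingleton {f g : α → β} (hf : Monotone f)
    (hgL : ∀ x ∈ LSet α, g x ≤ f x) (hgU : ∀ x ∈ USet α, f x ≤ g x) {m : α}
    (hm : f m ∈ USet β) :
    (g '' Xi m ∩ USet β).Subsingleton := by
  suffices h : ∀ x ∈ Xi m, g x ∈ USet β → g x = f m by
    rintro _ ⟨⟨x, hx, rfl⟩, hxU⟩ _ ⟨⟨y, hy, rfl⟩, hyU⟩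
    exact (h x hx hxU).trans (h y hy hyU).symm
  rintro x (⟨hxL, hxm⟩ | ⟨hxU, hmx⟩) hgx
  · exact (hgx _ ((hgL x hxL).trans (hf hxm))).symm
  · exact hm _ ((hf hmx).trans (hgU x hxU))

end Extremal

theorem stmt9_general {α β : Type*} [Fintype α] [PartialOrder α] [Fintype β] [PartialOrder β]
    (hiso : NoIsolated α) (hht : HeightOne β)
    (f : α → β) (hf : Monotone f) (hsurj : Function.Surjective f) :
    ∃ g : α → β, Monotone g ∧ g '' LSet α = LSet β ∧ g '' USet α = USet β ∧
      ∀ F ∈ bundles α,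
        ¬ ((∃ a ∈ g '' F ∩ LSet β, ∃ b ∈ g '' F ∩ LSet β, a ≠ b) ∧
           (∃ v ∈ g '' F ∩ USet β, ∃ w ∈ g '' F ∩ USet β, v ≠ w)) := by
  obtain ⟨g, hg, hgL, hgU⟩ := exists_monotone_push_extremal hiso hf
  refine ⟨g, hg, image_LSet_eq hf hsurj hgL, image_USet_eq hf hsurj hgU, ?_⟩
  rintro _ ⟨m, -, rfl, -⟩ ⟨⟨a, ha, b, hb, hab⟩, ⟨v, hv, w, hw, hvw⟩⟩
  have hgL' := fun x hx => (hgL x hx).1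
  have hgU' := fun x hx => (hgU x hx).1
  rcases hht.1 (f m) with hm | hm
  · exact hab (image_Xi_inter_LSet_subsingleton hf hgL' hgU' hm ha hb)
  · exact hvw (image_Xi_inter_USet_subsingleton hf hgL' hgU' hm hv hw)

theorem stmt9 {α β : Type*} [Fintype α] [PartialOrder α] [Fintype β] [PartialOrder β]
    [Nontrivial α] (hiso : NoIsolated α)
    (hconn : PosetConnected β) (hht : HeightOne β)
    (f : α → β) (hf : Monotone f) (hsurj : Function.Surjective f) :
    ∃ g : α → β, Monotone g ∧ g '' LSet α = LSet β ∧ g '' USet α = USet β ∧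
      ∀ F ∈ bundles α,
        ¬ ((∃ a ∈ g '' F ∩ LSet β, ∃ b ∈ g '' F ∩ LSet β, a ≠ b) ∧
           (∃ v ∈ g '' F ∩ USet β, ∃ w ∈ g '' F ∩ USet β, v ≠ w)) :=
  stmt9_general hiso hht f hf hsurj
end

section
/- Let P be a finite poset without isolated points and C a connected finite poset of height one. Suppose g : P → C is an order-preserving map and m ∈ P is a point lying in the inner of some improper 4-crown contained in E(P). Then the image under g of the set Ξ(m) = (L(P) ∩ ↓m) ∪ (U(P) ∩ ↑m) cannot contain two distinct minimal points of C and two distinct maximal points of C simultaneously. -/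
open Set

theorem stmt10 {α β : Type*} [Fintype α] [PartialOrder α] [Fintype β] [PartialOrder β]
    (hiso : NoIsolated α) (hconn : PosetConnected β) (hht : HeightOne β)
    (g : α → β) (hg : Monotone g) (m : α) (hm : m ∈ innerPts α) :
    ¬ ((∃ a ∈ g '' Xi m ∩ LSet β, ∃ b ∈ g '' Xi m ∩ LSet β, a ≠ b) ∧
       (∃ v ∈ g '' Xi m ∩ USet β, ∃ w ∈ g '' Xi m ∩ USet β, v ≠ w)) := by
  rintro ⟨⟨a, ⟨⟨x, hx, rfl⟩, ha⟩, b, ⟨⟨y, hy, rfl⟩, hb⟩, hab⟩,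
          ⟨v, ⟨⟨u, hu, rfl⟩, hv⟩, w, ⟨⟨z, hz, rfl⟩, hw⟩, hvw⟩⟩
  have key : ∀ t : α, t ∈ Xi m → g t ≤ g m ∨ g m ≤ g t := by
    rintro t (⟨_, ht⟩ | ⟨_, ht⟩)
    · exact Or.inl (hg ht)
    · exact Or.inr (hg ht)
  rcases hht.1 (g m) with hmin | hmax
  · have h1 : g x = g m := by
      rcases key x hx with h | h
      · exact hmin _ h
      · exact (ha _ h).symm
    have h2 : g y = g m := by
      rcases key y hy with h | h
      · exact hmin _ h
      · exact (hb _ h).symm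
    exact hab (h1.trans h2.symm)
  · have h1 : g u = g m := by
      rcases key u hu with h | h
      · exact (hv _ h).symm
      · exact hmax _ h
    have h2 : g z = g m := by
      rcases key z hz with h | h
      · exact (hw _ h).symm
      · exact hmax _ h
    exact hvw (h1.trans h2.symm)
end

section
/- Let P be a finite poset without isolated points and let C ⊆ E(P) be a 4-crown with edges a<v, a<w, b<v, b<w. Suppose that for each of the four edges (x,y) of C there exists an improper 4-crown in E(P) containing both x and y, and suppose that any two 4-crown bundles of P intersect both in a minimal point of P and in a maximal point of P (i.e., the bundle graph is complete in both edge types). Then C is not a retract of P. -/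
open Set

/-!
A retraction `r` onto the crown sends a point lying between a minimal point `x` and a maximal
point `y` of the crown to `x` or to `y`. Every edge of the crown has a bundle point between its
ends, so the images of the bundle points meet every edge of the 4-cycle `a v b w` and therefore
contain `a, b` or `v, w`. But any two bundles share a minimal and a maximal point of `P`, so the
images of any two bundle points have a common lower and a common upper bound in the crown, which
neither `a, b` nor `v, w` have.
-/

section CrownRetract

variable {α : Type*} [PartialOrder α] {x y m : α}

lemma mem_LSet_of_mem_ESet_of_lt (hx : x ∈ ESet α) (hxy : x < y) : x ∈ LSet α :=
  hx.resolve_right fun hU => hxy.ne' (hU y hxy.le)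

lemma mem_USet_of_mem_ESet_of_lt (hy : y ∈ ESet α) (hxy : x < y) : y ∈ USet α :=
  hy.resolve_left fun hL => hxy.ne (hL x hxy.le)

lemma not_mem_LSet_and_mem_USet_of_mem_innerPts (hm : m ∈ innerPts α) :
    ¬ (m ∈ LSet α ∧ m ∈ USet α) := by
  rintro ⟨hL, hU⟩
  obtain ⟨a, _, v, _, ⟨hcrown, _⟩, ⟨ham, hmv⟩, _⟩ := hm
  exact hcrown.1.ne ((hL a ham).trans (hU v hmv).symm)

lemma le_of_mem_Xi_of_mem_LSet (hm : m ∈ innerPts α) (hx : x ∈ LSet α) (hxm : x ∈ Xi m) :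
    x ≤ m := by
  rcases hxm with h | ⟨hxU, hmx⟩
  · exact h.2
  · exact absurd ⟨hx m hmx ▸ hx, hx m hmx ▸ hxU⟩ (not_mem_LSet_and_mem_USet_of_mem_innerPts hm)

lemma le_of_mem_Xi_of_mem_USet (hm : m ∈ innerPts α) (hy : y ∈ USet α) (hym : y ∈ Xi m) :
    m ≤ y := by
  rcases hym with ⟨hyL, hym⟩ | h
  · exact absurd ⟨hy m hym ▸ hyL, hy m hym ▸ hy⟩ (not_mem_LSet_and_mem_USet_of_mem_innerPts hm)
  · exact h.2

lemma exists_le_le_of_inter_Xi_LSet_nonempty {m' : α} (hm : m ∈ innerPts α)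
    (hm' : m' ∈ innerPts α) (h : (Xi m ∩ Xi m' ∩ LSet α).Nonempty) : ∃ l, l ≤ m ∧ l ≤ m' :=
  let ⟨l, ⟨hl, hl'⟩, hlL⟩ := h
  ⟨l, le_of_mem_Xi_of_mem_LSet hm hlL hl, le_of_mem_Xi_of_mem_LSet hm' hlL hl'⟩

lemma exists_le_le_of_inter_Xi_USet_nonempty {m' : α} (hm : m ∈ innerPts α)
    (hm' : m' ∈ innerPts α) (h : (Xi m ∩ Xi m' ∩ USet α).Nonempty) : ∃ u, m ≤ u ∧ m' ≤ u :=
  let ⟨u, ⟨hu, hu'⟩, huU⟩ := h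
  ⟨u, le_of_mem_Xi_of_mem_USet hm huU hu, le_of_mem_Xi_of_mem_USet hm' huU hu'⟩

lemma exists_mem_bundles_Xi_superset [Finite α] (hm : m ∈ innerPts α) :
    ∃ m₀ ∈ innerPts α, Xi m ⊆ Xi m₀ ∧ Xi m₀ ∈ bundles α := by
  obtain ⟨m₀, ⟨hm₀, hsub⟩, hmax⟩ :=
    (Set.toFinite {m' ∈ innerPts α | Xi m ⊆ Xi m'}).exists_maximalFor Xi _ ⟨m, hm, subset_rfl⟩
  exact ⟨m₀, hm₀, hsub, m₀, hm₀, rfl, fun m' hm' hsub' =>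
    (hmax ⟨hm', hsub.trans hsub'⟩ hsub').antisymm hsub'⟩

namespace IsImproperCrownE

variable {a b v w : α}

lemma eq_or_eq_of_lt (h : IsImproperCrownE a b v w) (hx : x ∈ ({a, b, v, w} : Set α))
    (hxy : x < y) : x = a ∨ x = b := by
  obtain ⟨hc, -, -, hv, hw, -⟩ := h
  rcases hx with rfl | rfl | rfl | rfl
  · exact .inl rfl
  · exact .inr rfl
  · exact absurd (mem_USet_of_mem_ESet_of_lt hv hc.1 y hxy.le) hxy.ne'
  · exact absurd (mem_USet_of_mem_ESet_of_lt hw hc.2.1 y hxy.le) hxy.ne'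

lemma eq_or_eq_of_gt (h : IsImproperCrownE a b v w) (hy : y ∈ ({a, b, v, w} : Set α))
    (hxy : x < y) : y = v ∨ y = w := by
  obtain ⟨hc, ha, hb, -, -, -⟩ := h
  rcases hy with rfl | rfl | rfl | rfl
  · exact absurd (mem_LSet_of_mem_ESet_of_lt ha hc.1 x hxy.le) hxy.ne
  · exact absurd (mem_LSet_of_mem_ESet_of_lt hb hc.2.2.1 x hxy.le) hxy.ne
  · exact .inl rfl
  · exact .inr rfl

lemma exists_mem_bundles_between [Finite α] (h : IsImproperCrownE a b v w)
    (hx : x ∈ ({a, b, v, w} : Set α)) (hy : y ∈ ({a, b, v, w} : Set α)) (hxy : x < y) :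
    ∃ m ∈ innerPts α, Xi m ∈ bundles α ∧ x ≤ m ∧ m ≤ y := by
  obtain ⟨m, hm⟩ := h.2.2.2.2.2
  have hxL : x ∈ LSet α ∧ x ≤ m := by
    rcases h.eq_or_eq_of_lt hx hxy with rfl | rfl
    · exact ⟨mem_LSet_of_mem_ESet_of_lt h.2.1 h.1.1, hm.1.1⟩
    · exact ⟨mem_LSet_of_mem_ESet_of_lt h.2.2.1 h.1.2.2.1, hm.2.1⟩
  have hyU : y ∈ USet α ∧ m ≤ y := by
    rcases h.eq_or_eq_of_gt hy hxy with rfl | rfl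
    · exact ⟨mem_USet_of_mem_ESet_of_lt h.2.2.2.1 h.1.1, hm.1.2⟩
    · exact ⟨mem_USet_of_mem_ESet_of_lt h.2.2.2.2.1 h.1.2.1, hm.2.2⟩
  obtain ⟨m₀, hm₀, hsub, hbundle⟩ := exists_mem_bundles_Xi_superset ⟨a, b, v, w, h, hm⟩
  exact ⟨m₀, hm₀, hbundle, le_of_mem_Xi_of_mem_LSet hm₀ hxL.1 (hsub (.inl hxL)),
    le_of_mem_Xi_of_mem_USet hm₀ hyU.1 (hsub (.inr hyU))⟩

end IsImproperCrownE

namespace IsCrown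

variable {a b v w c : α}

lemma lt_of_eq_or_eq (h : IsCrown a b v w) (hx : x = a ∨ x = b) (hy : y = v ∨ y = w) :
    x < y := by
  obtain ⟨hav, haw, hbv, hbw, -⟩ := h
  rcases hx with rfl | rfl <;> rcases hy with rfl | rfl <;> assumption

lemma eq_or_eq_of_le_of_le (h : IsCrown a b v w) (hx : x = a ∨ x = b) (hy : y = v ∨ y = w)
    (hc : c ∈ ({a, b, v, w} : Set α)) (hxc : x ≤ c) (hcy : c ≤ y) : c = x ∨ c = y := by
  obtain ⟨-, -, -, -, hab, hba, hvw, hwv⟩ := h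
  simp only [Set.mem_insert_iff, Set.mem_singleton_iff] at hc
  grind

lemma no_common_lower_bound (h : IsCrown a b v w) (hc : c ∈ ({a, b, v, w} : Set α)) :
    ¬ (c ≤ a ∧ c ≤ b) := by
  obtain ⟨hav, haw, -, -, hab, hba, -, -⟩ := h
  rintro ⟨hca, hcb⟩
  rcases hc with rfl | rfl | rfl | rfl
  exacts [hab hcb, hba hca, hav.not_ge hca, haw.not_ge hca]

lemma no_common_upper_bound (h : IsCrown a b v w) (hc : c ∈ ({a, b, v, w} : Set α)) :
    ¬ (v ≤ c ∧ w ≤ c) := by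
  obtain ⟨hav, -, hbv, -, -, -, hvw, hwv⟩ := h
  rintro ⟨hvc, hwc⟩
  rcases hc with rfl | rfl | rfl | rfl
  exacts [hav.not_ge hvc, hbv.not_ge hvc, hwv hwc, hvw hvc]

theorem not_isRetract_of_forall_exists_between (h : IsCrown a b v w) {T : Set α}
    (hT_edge : ∀ x y, (x = a ∨ x = b) → (y = v ∨ y = w) → ∃ m ∈ T, x ≤ m ∧ m ≤ y)
    (hT_lower : ∀ m ∈ T, ∀ m' ∈ T, ∃ l, l ≤ m ∧ l ≤ m')
    (hT_upper : ∀ m ∈ T, ∀ m' ∈ T, ∃ u, m ≤ u ∧ m' ≤ u) :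
    ¬ IsRetract α {a, b, v, w} := by
  rintro ⟨r, hr, hidem, hrange⟩
  have hr_mem (x : α) : r x ∈ ({a, b, v, w} : Set α) := hrange ▸ Set.mem_range_self x
  have hr_fix {c : α} (hc : c ∈ ({a, b, v, w} : Set α)) : r c = c := by
    obtain ⟨x, rfl⟩ := hrange ▸ hc
    exact hidem x
  have himage_edge {x y : α} (hx : x = a ∨ x = b) (hy : y = v ∨ y = w) :
      x ∈ r '' T ∨ y ∈ r '' T := by
    obtain ⟨m, hm, hxm, hmy⟩ := hT_edge x y hx hy
    have hxC : x ∈ ({a, b, v, w} : Set α) := by rcases hx with rfl | rfl <;> simp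
    have hyC : y ∈ ({a, b, v, w} : Set α) := by rcases hy with rfl | rfl <;> simp
    have hrm := h.eq_or_eq_of_le_of_le hx hy (hr_mem m) (hr_fix hxC ▸ hr hxm) (hr_fix hyC ▸ hr hmy)
    exact hrm.imp (fun e => ⟨m, hm, e⟩) (fun e => ⟨m, hm, e⟩)
  have himage_opposite : (a ∈ r '' T ∧ b ∈ r '' T) ∨ (v ∈ r '' T ∧ w ∈ r '' T) := by
    have := himage_edge (.inl rfl) (.inl rfl)
    have := himage_edge (.inl rfl) (.inr rfl)
    have := himage_edge (.inr rfl) (.inl rfl)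
    have := himage_edge (.inr rfl) (.inr rfl)
    tauto
  rcases himage_opposite with ⟨⟨m, hm, ha⟩, ⟨m', hm', hb⟩⟩ | ⟨⟨m, hm, hv⟩, ⟨m', hm', hw⟩⟩
  · obtain ⟨l, hl, hl'⟩ := hT_lower m hm m' hm'
    exact h.no_common_lower_bound (hr_mem l) ⟨ha ▸ hr hl, hb ▸ hr hl'⟩
  · obtain ⟨u, hu, hu'⟩ := hT_upper m hm m' hm'
    exact h.no_common_upper_bound (hr_mem u) ⟨hv ▸ hr hu, hw ▸ hr hu'⟩

end IsCrown

end CrownRetract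

theorem stmt12_general {α : Type*} [Fintype α] [PartialOrder α]
    (a b v w : α) (hcrown : IsCrown a b v w)
    (hedges : ∀ p ∈ ({(a, v), (a, w), (b, v), (b, w)} : Set (α × α)),
      ∃ a2 b2 v2 w2 : α, IsImproperCrownE a2 b2 v2 w2 ∧
        p.1 ∈ ({a2, b2, v2, w2} : Set α) ∧ p.2 ∈ ({a2, b2, v2, w2} : Set α))
    (hcomplete : ∀ F ∈ bundles α, ∀ G ∈ bundles α,
      (F ∩ G ∩ LSet α).Nonempty ∧ (F ∩ G ∩ USet α).Nonempty) :
    ¬ IsRetract α {a, b, v, w} := by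
  refine hcrown.not_isRetract_of_forall_exists_between
    (T := {m | m ∈ innerPts α ∧ Xi m ∈ bundles α}) ?_ ?_ ?_
  · intro x y hx hy
    obtain ⟨a', b', v', w', himp, hx', hy'⟩ := hedges (x, y) <| by
      rcases hx with rfl | rfl <;> rcases hy with rfl | rfl <;> simp
    obtain ⟨m, hm, hF, hxm, hmy⟩ :=
      himp.exists_mem_bundles_between hx' hy' (hcrown.lt_of_eq_or_eq hx hy)
    exact ⟨m, ⟨hm, hF⟩, hxm, hmy⟩
  · rintro m ⟨hm, hF⟩ m' ⟨hm', hF'⟩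
    exact exists_le_le_of_inter_Xi_LSet_nonempty hm hm' (hcomplete _ hF _ hF').1
  · rintro m ⟨hm, hF⟩ m' ⟨hm', hF'⟩
    exact exists_le_le_of_inter_Xi_USet_nonempty hm hm' (hcomplete _ hF _ hF').2

theorem stmt12 {α : Type*} [Fintype α] [PartialOrder α]
    (hiso : NoIsolated α) (a b v w : α) (hcrown : IsCrown a b v w)
    (ha : a ∈ ESet α) (hb : b ∈ ESet α) (hv : v ∈ ESet α) (hw : w ∈ ESet α)
    (hedges : ∀ p ∈ ({(a, v), (a, w), (b, v), (b, w)} : Set (α × α)),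
      ∃ a2 b2 v2 w2 : α, IsImproperCrownE a2 b2 v2 w2 ∧
        p.1 ∈ ({a2, b2, v2, w2} : Set α) ∧ p.2 ∈ ({a2, b2, v2, w2} : Set α))
    (hcomplete : ∀ F ∈ bundles α, ∀ G ∈ bundles α,
      (F ∩ G ∩ LSet α).Nonempty ∧ (F ∩ G ∩ USet α).Nonempty) :
    ¬ IsRetract α {a, b, v, w} :=
  stmt12_general a b v w hcrown hedges hcomplete
end

section
/- Let P be a finite poset without isolated points with at most three minimal points and at most three maximal points, and let C ⊆ E(P) be a 4-crown. Then C is a retract of P if and only if at least one of the four edges of C is not contained in any improper 4-crown of P. -/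
open Set

/-! An edge (x, y) of the crown, x minimal and y maximal, lies in an improper 4-crown exactly
when some m ∈ [x, y] lies above a second minimal point and below a second maximal point.

If the edge (a, v) is free, every point of [a, v] has a as its only minimal lower bound or v as
its only maximal upper bound. Then sending x to v if v is the only maximal point above x, else to
a if a is the only minimal point below x, else to w if x lies above w or above a point already
sent to a, and to b otherwise, is a retraction onto the crown.

Conversely, a retraction r sends such an m for the edge (a, v) into {a, v}, hence it sends a
minimal point other than a onto a, or a maximal point other than v onto v. Applied to all four
edges, this forces r to send extra minimal points onto both a and b, or extra maximal points onto
both v and w, which needs four minimal or four maximal points. -/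

def CollapsesOnto {α : Type*} (r : α → α) (S : Set α) (x : α) : Prop := ∃ c ∈ S, c ≠ x ∧ r c = x

lemma not_collapsesOnto_and_of_ncard_le_three {α : Type*} [Finite α] {S : Set α} (hS : S.ncard ≤ 3)
    {r : α → α} {x y : α} (hx : x ∈ S) (hy : y ∈ S) (hxy : x ≠ y) (hrx : r x = x)
    (hry : r y = y) : ¬ (CollapsesOnto r S x ∧ CollapsesOnto r S y) := by
  rintro ⟨⟨c, hc, hcx, hrc⟩, d, hd, hdy, hrd⟩
  have hcd : c ≠ d := by rintro rfl; exact hxy (hrc.symm.trans hrd)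
  have hcy : c ≠ y := by rintro rfl; exact hxy (hrc.symm.trans hry)
  have hdx : d ≠ x := by rintro rfl; exact hxy (hrx.symm.trans hrd)
  have hsub : ({x, y, c, d} : Set α) ⊆ S := by
    simp only [Set.insert_subset_iff, Set.singleton_subset_iff]
    exact ⟨hx, hy, hc, hd⟩
  have h4 : ({x, y, c, d} : Set α).ncard = 4 := by
    rw [Set.ncard_insert_of_notMem, Set.ncard_insert_of_notMem, Set.ncard_pair hcd] <;>
      simp [*, Ne.symm hcx, Ne.symm hcy, Ne.symm hdy, Ne.symm hdx]
  have := Set.ncard_le_ncard hsub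
  omega

section CrownRetract

variable {α : Type*} [PartialOrder α] {a b v w : α}

lemma mem_LSet_of_lt {x y : α} (hx : x ∈ ESet α) (hxy : x < y) : x ∈ LSet α :=
  hx.resolve_right fun h => hxy.ne' (h y hxy.le)

lemma mem_USet_of_lt {x y : α} (hy : y ∈ ESet α) (hxy : x < y) : y ∈ USet α :=
  hy.resolve_left fun h => hxy.ne (h x hxy.le)

lemma IsCrown.swap_min (hc : IsCrown a b v w) : IsCrown b a v w :=
  let ⟨hav, haw, hbv, hbw, hab, hba, hvw, hwv⟩ := hc
  ⟨hbv, hbw, hav, haw, hba, hab, hvw, hwv⟩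

lemma IsCrown.swap_max (hc : IsCrown a b v w) : IsCrown a b w v :=
  let ⟨hav, haw, hbv, hbw, hab, hba, hvw, hwv⟩ := hc
  ⟨haw, hav, hbw, hbv, hab, hba, hwv, hvw⟩

lemma IsCrown.ne_min (hc : IsCrown a b v w) : a ≠ b :=
  let ⟨_, _, _, _, hab, _⟩ := hc
  fun h => hab h.le

lemma IsCrown.ne_max (hc : IsCrown a b v w) : v ≠ w :=
  let ⟨_, _, _, _, _, _, hvw, _⟩ := hc
  fun h => hvw h.le

lemma IsImproperCrownE.swap_min (h : IsImproperCrownE a b v w) : IsImproperCrownE b a v w :=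
  let ⟨hc, ha, hb, hv, hw, m, ⟨ham, hmv⟩, hbm, hmw⟩ := h
  ⟨hc.swap_min, hb, ha, hv, hw, m, ⟨hbm, hmv⟩, ham, hmw⟩

lemma IsImproperCrownE.swap_max (h : IsImproperCrownE a b v w) : IsImproperCrownE a b w v :=
  let ⟨hc, ha, hb, hv, hw, m, ⟨ham, hmv⟩, hbm, hmw⟩ := h
  ⟨hc.swap_max, ha, hb, hw, hv, m, ⟨ham, hmw⟩, hbm, hmv⟩

def InImproperCrown (x y : α) : Prop :=
  ∃ a2 b2 v2 w2 : α, IsImproperCrownE a2 b2 v2 w2 ∧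
    x ∈ ({a2, b2, v2, w2} : Set α) ∧ y ∈ ({a2, b2, v2, w2} : Set α)

def OnlyMinBelow (a x : α) : Prop := ∀ l ∈ LSet α, l ≤ x → l = a

def OnlyMaxAbove (v x : α) : Prop := ∀ u ∈ USet α, x ≤ u → u = v

lemma OnlyMinBelow.anti {x y : α} (hxy : x ≤ y) (h : OnlyMinBelow a y) : OnlyMinBelow a x :=
  fun l hl hlx => h l hl (hlx.trans hxy)

lemma OnlyMaxAbove.mono {x y : α} (hxy : x ≤ y) (h : OnlyMaxAbove v x) : OnlyMaxAbove v y :=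
  fun u hu hyu => h u hu (hxy.trans hyu)

lemma onlyMinBelow_self (ha : a ∈ LSet α) : OnlyMinBelow a a := fun l _ hla => ha l hla

lemma onlyMaxAbove_self (hv : v ∈ USet α) : OnlyMaxAbove v v := fun u _ hvu => hv u hvu

lemma not_onlyMinBelow_iff {x : α} : ¬ OnlyMinBelow a x ↔ ∃ l ∈ LSet α, l ≤ x ∧ l ≠ a := by
  simp [OnlyMinBelow]

lemma not_onlyMaxAbove_iff {x : α} : ¬ OnlyMaxAbove v x ↔ ∃ u ∈ USet α, x ≤ u ∧ u ≠ v := by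
  simp [OnlyMaxAbove]

lemma OnlyMinBelow.le [Finite α] {x : α} (h : OnlyMinBelow a x) : a ≤ x := by
  obtain ⟨l, hlx, hmin⟩ := Set.Finite.exists_minimalFor id {y | y ≤ x} (Set.toFinite _)
    ⟨x, le_rfl⟩
  have hl : l ∈ LSet α := fun z hz => le_antisymm hz (hmin (hz.trans hlx) hz)
  exact h l hl hlx ▸ hlx

lemma OnlyMaxAbove.le [Finite α] {x : α} (h : OnlyMaxAbove v x) : x ≤ v := by
  obtain ⟨u, hxu, hmax⟩ := Set.Finite.exists_maximalFor id {y | x ≤ y} (Set.toFinite _)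
    ⟨x, le_rfl⟩
  have hu : u ∈ USet α := fun z hz => le_antisymm (hmax (hxu.trans hz) hz) hz
  exact h u hu hxu ▸ hxu

lemma IsImproperCrownE.exists_between (h : IsImproperCrownE a b v w) :
    ∃ m, a ≤ m ∧ m ≤ v ∧ ¬ OnlyMinBelow a m ∧ ¬ OnlyMaxAbove v m := by
  obtain ⟨⟨-, haw, hbv, -, hab, -, hvw, -⟩, -, hb, -, hw, m, ⟨ham, hmv⟩, hbm, hmw⟩ := h
  exact ⟨m, ham, hmv,
    not_onlyMinBelow_iff.2 ⟨b, mem_LSet_of_lt hb hbv, hbm, fun h => hab h.ge⟩,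
    not_onlyMaxAbove_iff.2 ⟨w, mem_USet_of_lt hw haw, hmw, fun h => hvw h.ge⟩⟩

lemma inImproperCrown_iff {x y : α} (hx : x ∈ LSet α) (hy : y ∈ USet α) (hxy : x < y) :
    InImproperCrown x y ↔ ∃ m, x ≤ m ∧ m ≤ y ∧ ¬ OnlyMinBelow x m ∧ ¬ OnlyMaxAbove y m := by
  constructor
  · rintro ⟨a2, b2, v2, w2, h, hxC, hyC⟩
    have ⟨⟨hav, haw, hbv, _⟩, _⟩ := h
    have hx' : x = a2 ∨ x = b2 := by
      rcases hxC with rfl | rfl | rfl | rfl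
      exacts [.inl rfl, .inr rfl, absurd (hx a2 hav.le) hav.ne, absurd (hx a2 haw.le) haw.ne]
    have hy' : y = v2 ∨ y = w2 := by
      rcases hyC with rfl | rfl | rfl | rfl
      exacts [absurd (hy v2 hav.le) hav.ne', absurd (hy v2 hbv.le) hbv.ne', .inl rfl, .inr rfl]
    rcases hx' with rfl | rfl <;> rcases hy' with rfl | rfl
    exacts [h.exists_between, h.swap_max.exists_between, h.swap_min.exists_between,
      h.swap_min.swap_max.exists_between]
  · rintro ⟨m, hxm, hmy, hxm', hym'⟩
    obtain ⟨b', hb', hb'm, hb'x⟩ := not_onlyMinBelow_iff.1 hxm'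
    obtain ⟨w', hw', hmw', hw'y⟩ := not_onlyMaxAbove_iff.1 hym'
    refine ⟨x, b', y, w', ⟨⟨hxy, ?_, ?_, ?_, ?_, ?_, ?_, ?_⟩, .inl hx, .inl hb', .inr hy, .inr hw',
      m, ⟨hxm, hmy⟩, hb'm, hmw'⟩, by simp, by simp⟩
    · exact lt_of_le_of_ne (hxm.trans hmw') (by rintro rfl; exact hw'y (hw' y hxy.le).symm)
    · exact lt_of_le_of_ne (hb'm.trans hmy) (by rintro rfl; exact hb'x (hb' x hxy.le).symm)
    · exact lt_of_le_of_ne (hb'm.trans hmw')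
        (by rintro rfl; exact hb'x (hb' x (hxm.trans hmw')).symm)
    · exact fun h => hb'x (hb' x h).symm
    · exact fun h => hb'x (hx b' h)
    · exact fun h => hw'y (hy w' h)
    · exact fun h => hw'y (hw' y h).symm

lemma isRetract_iff {C : Set α} :
    IsRetract α C ↔ ∃ r : α → α, Monotone r ∧ (∀ x, r x ∈ C) ∧ ∀ c ∈ C, r c = c := by
  constructor
  · rintro ⟨r, hr, hrr, rfl⟩
    exact ⟨r, hr, fun x => ⟨x, rfl⟩, fun _ ⟨x, hx⟩ => hx ▸ hrr x⟩
  · rintro ⟨r, hr, hrC, hfix⟩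
    refine ⟨r, hr, fun x => hfix _ (hrC x), ?_⟩
    exact Set.Subset.antisymm (Set.range_subset_iff.2 hrC) fun c hc => ⟨c, hfix c hc⟩

/-- The hypotheses say that the fibres over `v` and `w` are upper sets and those over `a` and `b`
lower sets. -/
lemma IsCrown.monotone_ite (hc : IsCrown a b v w) {P Q R : α → Prop}
    [DecidablePred P] [DecidablePred Q] [DecidablePred R]
    (hP : ∀ ⦃x y⦄, x ≤ y → P x → P y)
    (hQ : ∀ ⦃x y⦄, x ≤ y → ¬ P y → Q y → ¬ P x ∧ Q x)
    (hR : ∀ ⦃x y⦄, x ≤ y → ¬ P x → ¬ Q x → R x → ¬ P y ∧ ¬ Q y ∧ R y)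
    (hB : ∀ ⦃x y⦄, x ≤ y → ¬ P y → ¬ Q y → ¬ R y → ¬ P x ∧ ¬ Q x ∧ ¬ R x) :
    Monotone fun x => if P x then v else if Q x then a else if R x then w else b := by
  obtain ⟨hav, haw, hbv, hbw, -⟩ := hc
  intro x y hxy
  dsimp only
  split_ifs <;> first
    | exact le_rfl | exact hav.le | exact haw.le | exact hbv.le | exact hbw.le
    | (exfalso; grind)

open Classical in
noncomputable def crownRetraction (a b v w x : α) : α :=
  if OnlyMaxAbove v x then v
  else if OnlyMinBelow a x then a
  else if w ≤ x ∨ ∃ y ≤ x, OnlyMinBelow a y ∧ ¬ OnlyMaxAbove v y then w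
  else b

theorem isRetract_of_not_inImproperCrown [Finite α] (hc : IsCrown a b v w)
    (ha : a ∈ LSet α) (hb : b ∈ LSet α) (hv : v ∈ USet α) (hw : w ∈ USet α)
    (hfree : ¬ InImproperCrown a v) : IsRetract α {a, b, v, w} := by
  classical
  rw [inImproperCrown_iff ha hv hc.1] at hfree
  push Not at hfree
  have ⟨_, haw, _, hbw, hab, _, _, hwv⟩ := hc
  have hba : b ≠ a := fun h => hab h.ge
  replace hwv : w ≠ v := fun h => hwv h.le
  have hPa : ¬ OnlyMaxAbove v a := not_onlyMaxAbove_iff.2 ⟨w, hw, haw.le, hwv⟩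
  have hPb : ¬ OnlyMaxAbove v b := not_onlyMaxAbove_iff.2 ⟨w, hw, hbw.le, hwv⟩
  have hPw : ¬ OnlyMaxAbove v w := not_onlyMaxAbove_iff.2 ⟨w, hw, le_rfl, hwv⟩
  have hQb : ¬ OnlyMinBelow a b := not_onlyMinBelow_iff.2 ⟨b, hb, le_rfl, hba⟩
  have hQw : ¬ OnlyMinBelow a w := not_onlyMinBelow_iff.2 ⟨b, hb, hbw.le, hba⟩
  refine isRetract_iff.2 ⟨crownRetraction a b v w, hc.monotone_ite ?_ ?_ ?_ ?_, fun x => ?_, ?_⟩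
  · exact fun x y hxy h => h.mono hxy
  · exact fun x y hxy hPy hQy => ⟨fun hPx => hPy (hPx.mono hxy), hQy.anti hxy⟩
  · intro x y hxy hPx hQx hRx
    refine ⟨fun hPy => ?_, fun hQy => hQx (hQy.anti hxy), hRx.imp (·.trans hxy) ?_⟩
    · rcases hRx with hwx | ⟨z, hzx, hQz, -⟩
      · exact hwv (hPy w hw (hw y (hwx.trans hxy)).le)
      · exact hPx (hfree x (hQz.le.trans hzx) (hxy.trans hPy.le) hQx)
    · exact fun ⟨z, hzx, hz⟩ => ⟨z, hzx.trans hxy, hz⟩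
  · intro x y hxy hPy hQy hRy
    have hPx : ¬ OnlyMaxAbove v x := fun hPx => hPy (hPx.mono hxy)
    refine ⟨hPx, fun hQx => hRy (.inr ⟨x, hxy, hQx, hPx⟩), fun hRx => hRy ?_⟩
    exact hRx.imp (·.trans hxy) fun ⟨z, hzx, hz⟩ => ⟨z, hzx.trans hxy, hz⟩
  · unfold crownRetraction
    split_ifs <;> simp
  · simp only [Set.mem_insert_iff, Set.mem_singleton_iff]
    rintro c (rfl | rfl | rfl | rfl) <;> unfold crownRetraction
    · simp [hPa, onlyMinBelow_self ha]
    · have hRb : ¬ (w ≤ c ∨ ∃ y ≤ c, OnlyMinBelow a y ∧ ¬ OnlyMaxAbove v y) := by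
        rintro (hwb | ⟨z, hzb, hQz, -⟩)
        exacts [hbw.not_ge hwb, hab (hQz.le.trans hzb)]
      simp [hPb, hQb, hRb]
    · simp [onlyMaxAbove_self hv]
    · simp [hPw, hQw]

lemma IsCrown.eq_of_le_left (hc : IsCrown a b v w) {c : α} (hcC : c ∈ ({a, b, v, w} : Set α))
    (hca : c ≤ a) : c = a := by
  obtain ⟨hav, haw, -, -, -, hba, -⟩ := hc
  rcases hcC with rfl | rfl | rfl | rfl
  exacts [rfl, absurd hca hba, absurd hca hav.not_ge, absurd hca haw.not_ge]

lemma IsCrown.eq_of_le_right (hc : IsCrown a b v w) {c : α} (hcC : c ∈ ({a, b, v, w} : Set α))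
    (hvc : v ≤ c) : c = v := by
  obtain ⟨hav, -, hbv, -, -, -, hvw, -⟩ := hc
  rcases hcC with rfl | rfl | rfl | rfl
  exacts [absurd hvc hav.not_ge, absurd hvc hbv.not_ge, rfl, absurd hvc hvw]

lemma IsCrown.collapsesOnto_of_inImproperCrown (hc : IsCrown a b v w)
    (ha : a ∈ LSet α) (hv : v ∈ USet α) {r : α → α} (hr : Monotone r)
    (hrC : ∀ x, r x ∈ ({a, b, v, w} : Set α)) (hra : r a = a) (hrv : r v = v)
    (h : InImproperCrown a v) : CollapsesOnto r (LSet α) a ∨ CollapsesOnto r (USet α) v := by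
  obtain ⟨m, ham, hmv, hQm, hPm⟩ := (inImproperCrown_iff ha hv hc.1).1 h
  obtain ⟨b', hb', hb'm, hb'a⟩ := not_onlyMinBelow_iff.1 hQm
  obtain ⟨w', hw', hmw', hw'v⟩ := not_onlyMaxAbove_iff.1 hPm
  have ⟨_, _, _, _, hab, _, _, hwv⟩ := hc
  rcases hrC m with hm | hm | hm | hm
  · exact .inl ⟨b', hb', hb'a, hc.eq_of_le_left (hrC b') (hm ▸ hr hb'm)⟩
  · exact absurd (hm ▸ hra ▸ hr ham) hab
  · exact .inr ⟨w', hw', hw'v, hc.eq_of_le_right (hrC w') (hm ▸ hr hmw')⟩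
  · exact absurd (hm ▸ hrv ▸ hr hmv) hwv

theorem IsCrown.not_isRetract [Finite α] (hc : IsCrown a b v w)
    (ha : a ∈ LSet α) (hb : b ∈ LSet α) (hv : v ∈ USet α) (hw : w ∈ USet α)
    (hL3 : (LSet α).ncard ≤ 3) (hU3 : (USet α).ncard ≤ 3)
    (hav : InImproperCrown a v) (haw : InImproperCrown a w)
    (hbv : InImproperCrown b v) (hbw : InImproperCrown b w) :
    ¬ IsRetract α {a, b, v, w} := by
  intro hret
  obtain ⟨r, hr, hrC, hfix⟩ := isRetract_iff.1 hret
  have hrC_max : ∀ x, r x ∈ ({a, b, w, v} : Set α) := by rwa [Set.pair_comm]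
  have hrC_min : ∀ x, r x ∈ ({b, a, v, w} : Set α) := by rwa [Set.insert_comm]
  have hrC_both : ∀ x, r x ∈ ({b, a, w, v} : Set α) := by rwa [Set.pair_comm]
  have hra := hfix a (by simp)
  have hrb := hfix b (by simp)
  have hrv := hfix v (by simp)
  have hrw := hfix w (by simp)
  have := hc.collapsesOnto_of_inImproperCrown ha hv hr hrC hra hrv hav
  have := hc.swap_max.collapsesOnto_of_inImproperCrown ha hw hr hrC_max hra hrw haw
  have := hc.swap_min.collapsesOnto_of_inImproperCrown hb hv hr hrC_min hrb hrv hbv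
  have := hc.swap_min.swap_max.collapsesOnto_of_inImproperCrown hb hw hr hrC_both hrb hrw hbw
  have := not_collapsesOnto_and_of_ncard_le_three hL3 ha hb hc.ne_min hra hrb
  have := not_collapsesOnto_and_of_ncard_le_three hU3 hv hw hc.ne_max hrv hrw
  tauto

end CrownRetract

theorem stmt13_general {α : Type*} [Fintype α] [PartialOrder α]
    (hL3 : (LSet α).ncard ≤ 3) (hU3 : (USet α).ncard ≤ 3)
    (a b v w : α) (hcrown : IsCrown a b v w)
    (ha : a ∈ ESet α) (hb : b ∈ ESet α) (hv : v ∈ ESet α) (hw : w ∈ ESet α) :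
    IsRetract α {a, b, v, w} ↔
      ∃ p ∈ ({(a, v), (a, w), (b, v), (b, w)} : Set (α × α)),
        ¬ ∃ a2 b2 v2 w2 : α, IsImproperCrownE a2 b2 v2 w2 ∧
          p.1 ∈ ({a2, b2, v2, w2} : Set α) ∧ p.2 ∈ ({a2, b2, v2, w2} : Set α) := by
  have ⟨hav, haw, hbv, _⟩ := hcrown
  have haL := mem_LSet_of_lt ha hav
  have hbL := mem_LSet_of_lt hb hbv
  have hvU := mem_USet_of_lt hv hav
  have hwU := mem_USet_of_lt hw haw
  constructor
  · intro hret
    by_contra! hcov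
    exact hcrown.not_isRetract haL hbL hvU hwU hL3 hU3 (hcov (a, v) (by simp))
      (hcov (a, w) (by simp)) (hcov (b, v) (by simp)) (hcov (b, w) (by simp)) hret
  · rintro ⟨p, hp, hfree⟩
    simp only [Set.mem_insert_iff, Set.mem_singleton_iff] at hp
    rcases hp with rfl | rfl | rfl | rfl
    · exact isRetract_of_not_inImproperCrown hcrown haL hbL hvU hwU hfree
    · rw [Set.pair_comm]
      exact isRetract_of_not_inImproperCrown hcrown.swap_max haL hbL hwU hvU hfree
    · rw [Set.insert_comm]
      exact isRetract_of_not_inImproperCrown hcrown.swap_min hbL haL hvU hwU hfree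
    · rw [Set.insert_comm, Set.pair_comm]
      exact isRetract_of_not_inImproperCrown hcrown.swap_min.swap_max hbL haL hwU hvU hfree

theorem stmt13 {α : Type*} [Fintype α] [PartialOrder α]
    (hiso : NoIsolated α) (hL3 : (LSet α).ncard ≤ 3) (hU3 : (USet α).ncard ≤ 3)
    (a b v w : α) (hcrown : IsCrown a b v w)
    (ha : a ∈ ESet α) (hb : b ∈ ESet α) (hv : v ∈ ESet α) (hw : w ∈ ESet α) :
    IsRetract α {a, b, v, w} ↔
      ∃ p ∈ ({(a, v), (a, w), (b, v), (b, w)} : Set (α × α)),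
        ¬ ∃ a2 b2 v2 w2 : α, IsImproperCrownE a2 b2 v2 w2 ∧
          p.1 ∈ ({a2, b2, v2, w2} : Set α) ∧ p.2 ∈ ({a2, b2, v2, w2} : Set α) :=
  stmt13_general hL3 hU3 a b v w hcrown ha hb hv hw
end

section
/- Let P be a finite poset without isolated points and F = Ξ(m) a 4-crown bundle of P arising from the inner point m of an improper 4-crown in E(P). Then F, as an induced subposet of P, contains an improper 4-crown of P, and every point of F ∩ L(P) is below m and every point of F ∩ U(P) is above m in P. -/
open Set

theorem stmt18 {α : Type*} [Fintype α] [PartialOrder α]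
    (hiso : NoIsolated α) (m : α) (hm : m ∈ innerPts α) :
    (∃ a ∈ Xi m, ∃ b ∈ Xi m, ∃ v ∈ Xi m, ∃ w ∈ Xi m, IsImproperCrownE a b v w) ∧
    (∀ x ∈ Xi m ∩ LSet α, x ≤ m) ∧ (∀ y ∈ Xi m ∩ USet α, m ≤ y) := by
  obtain ⟨a, b, v, w, ⟨hc, ha, hb, hv, hw, _⟩, ⟨ham, hmv⟩, hbm, hmw⟩ := hm
  obtain ⟨hav, haw, hbv, hbw, _, _, _, _⟩ := hc
  -- a, b are minimal; v, w are maximal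
  have haL : a ∈ LSet α := by
    rcases ha with h | h
    · exact h
    · exact absurd (h v hav.le) hav.ne'
  have hbL : b ∈ LSet α := by
    rcases hb with h | h
    · exact h
    · exact absurd (h v hbv.le) hbv.ne'
  have hvU : v ∈ USet α := by
    rcases hv with h | h
    · exact absurd (h a hav.le) hav.ne
    · exact h
  have hwU : w ∈ USet α := by
    rcases hw with h | h
    · exact absurd (h a haw.le) haw.ne
    · exact h
  have notBoth : ∀ x : α, x ∈ LSet α → x ∈ USet α → False := by
    intro x hL hU
    obtain ⟨y, hy | hy⟩ := hiso x
    · exact hy.ne' (hU y hy.le)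
    · exact hy.ne (hL y hy.le)
  refine ⟨⟨a, Or.inl ⟨haL, ham⟩, b, Or.inl ⟨hbL, hbm⟩, v, Or.inr ⟨hvU, hmv⟩,
      w, Or.inr ⟨hwU, hmw⟩,
      ⟨hav, haw, hbv, hbw, ‹_›, ‹_›, ‹_›, ‹_›⟩, Or.inl haL, Or.inl hbL,
      Or.inr hvU, Or.inr hwU, ⟨m, ⟨ham, hmv⟩, hbm, hmw⟩⟩, ?_, ?_⟩
  · rintro x ⟨hx | hx, hxL⟩
    · exact hx.2
    · exact absurd (notBoth x hxL hx.1) not_false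
  · rintro y ⟨hy | hy, hyU⟩
    · exact absurd (notBoth y hy.1 hyU) not_false
    · exact hy.2
end

section
/- Let P be a finite poset without isolated points and C = L(C) ⊕ U(C) ⊆ E(P) an ordinal sum of two nonempty antichains with L(C) ⊆ L(P) and U(C) ⊆ U(P). Let Y be the union of all 4-crown bundles of P, all inner points of improper 4-crowns in E(P), and C, and let Q be the induced subposet of P on Y. Then C is a retract of P if and only if C is a retract of Q. -/
open Set

-- helpers
section Aux
set_option linter.unusedSectionVars false
variable {α : Type*} [Fintype α] [PartialOrder α]

/-- The union Y. -/
def YSet {α : Type*} [PartialOrder α] (A B : Set α) : Set α :=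
  ⋃₀ bundles α ∪ innerPts α ∪ (A ∪ B)

lemma exists_min_le (x : α) : ∃ m, m ∈ LSet α ∧ m ≤ x := by
  obtain ⟨m, hm, hmin⟩ :=
    Set.Finite.exists_minimalFor id {z : α | z ≤ x} (Set.toFinite _) ⟨x, le_refl x⟩
  exact ⟨m, fun y hy => le_antisymm hy (hmin (hy.trans hm) hy), hm⟩

lemma exists_max_ge (x : α) : ∃ m, m ∈ USet α ∧ x ≤ m := by
  obtain ⟨m, hm, hmax⟩ :=
    Set.Finite.exists_maximalFor id {z : α | x ≤ z} (Set.toFinite _) ⟨x, le_refl x⟩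
  exact ⟨m, fun y hy => le_antisymm (hmax (hm.trans hy) hy) hy, hm⟩

lemma Xi_sub_bundles {m : α} (hm : m ∈ innerPts α) : Xi m ⊆ ⋃₀ bundles α := by
  classical
  set I : Set α := {m' | m' ∈ innerPts α ∧ Xi m ⊆ Xi m'} with hI
  obtain ⟨m', hm'I, hmax⟩ := Set.Finite.exists_maximalFor (fun m' => (Xi m').ncard) I
    (Set.toFinite _) ⟨m, hm, subset_rfl⟩
  intro x hx
  refine ⟨Xi m', ⟨m', hm'I.1, rfl, ?_⟩, hm'I.2 hx⟩
  intro m'' hm'' hsub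
  have hm''I : m'' ∈ I := ⟨hm'', hm'I.2.trans hsub⟩
  have hcard := le_antisymm (Set.ncard_le_ncard hsub (Set.toFinite _))
    (hmax hm''I (Set.ncard_le_ncard hsub (Set.toFinite _)))
  exact (Set.eq_of_subset_of_ncard_le hsub (le_of_eq hcard.symm) (Set.toFinite _)).symm

lemma min_below_inner_mem {A B : Set α} {x m : α} (hx : x ∈ LSet α) (hm : m ∈ innerPts α)
    (hle : x ≤ m) : x ∈ YSet A B :=
  Or.inl (Or.inl (Xi_sub_bundles hm (Or.inl ⟨hx, hle⟩)))

lemma max_above_inner_mem {A B : Set α} {x m : α} (hx : x ∈ USet α) (hm : m ∈ innerPts α)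
    (hle : m ≤ x) : x ∈ YSet A B :=
  Or.inl (Or.inl (Xi_sub_bundles hm (Or.inr ⟨hx, hle⟩)))

lemma innerPts_sub_Y {A B : Set α} : innerPts α ⊆ YSet A B := fun _ h => Or.inl (Or.inr h)

lemma C_sub_Y {A B : Set α} : A ∪ B ⊆ YSet A B := fun _ h => Or.inr h

lemma Y_sub {A B : Set α} (hAE : A ∪ B ⊆ ESet α) :
    YSet A B ⊆ ESet α ∪ innerPts α := by
  rintro x (⟨hx | hx⟩ | hx)
  · rcases hx with ⟨F, ⟨m, _, rfl, _⟩, hxF⟩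
    rcases hxF with ⟨h, _⟩ | ⟨h, _⟩
    · exact Or.inl (Or.inl h)
    · exact Or.inl (Or.inr h)
  · exact Or.inr hx
  · exact Or.inl (hAE hx)

/-- dichotomy for points outside Y -/
lemma dich {A B : Set α} {x : α} (hxE : x ∉ ESet α) (hxY : x ∉ YSet A B) :
    (∀ m1 m2, m1 ∈ LSet α → m2 ∈ LSet α → m1 ≤ x → m2 ≤ x → m1 = m2) ∨
    (∀ v1 v2, v1 ∈ USet α → v2 ∈ USet α → x ≤ v1 → x ≤ v2 → v1 = v2) := by
  by_contra h
  push_neg at h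
  obtain ⟨⟨m1, m2, hm1, hm2, hm1x, hm2x, hmne⟩, ⟨v1, v2, hv1, hv2, hxv1, hxv2, hvne⟩⟩ := h
  apply hxY
  apply innerPts_sub_Y
  have hlt : ∀ (m v : α), m ∈ LSet α → m ≤ x → x ≤ v → m < v := by
    intro m v hmL hmx hxv
    refine lt_of_le_of_ne (hmx.trans hxv) ?_
    rintro rfl
    exact hxE (Or.inl (by rwa [le_antisymm hmx hxv] at hmL))
  refine ⟨m1, m2, v1, v2, ⟨⟨hlt _ _ hm1 hm1x hxv1, hlt _ _ hm1 hm1x hxv2,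
    hlt _ _ hm2 hm2x hxv1, hlt _ _ hm2 hm2x hxv2, ?_, ?_, ?_, ?_⟩,
    Or.inl hm1, Or.inl hm2, Or.inr hv1, Or.inr hv2, ⟨x, ⟨hm1x, hxv1⟩, ⟨hm2x, hxv2⟩⟩⟩,
    ⟨hm1x, hxv1⟩, ⟨hm2x, hxv2⟩⟩
  · intro hle; exact hmne (hm2 _ hle)
  · intro hle; exact hmne (hm1 _ hle).symm
  · intro hle; exact hvne (hv1 _ hle).symm
  · intro hle; exact hvne (hv2 _ hle)

end Aux

section Steps
set_option linter.unusedSectionVars false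
set_option maxHeartbeats 800000
variable {α : Type*} [Fintype α] [PartialOrder α]

/-- Partial retraction onto A ∪ B defined (at least) on S. -/
def PartRet {α : Type*} [PartialOrder α] (A B S : Set α) (g : α → α) : Prop :=
  (∀ ⦃x⦄, x ∈ S → ∀ ⦃y⦄, y ∈ S → x ≤ y → g x ≤ g y) ∧
  (∀ x ∈ S, g x ∈ A ∪ B) ∧ (∀ c ∈ A ∪ B, g c = c)

variable {A B : Set α} (hAL : A ⊆ LSet α) (hBU : B ⊆ USet α)
  (hAB : ∀ a ∈ A, ∀ b ∈ B, a < b) (hABd : ∀ x, x ∈ A → x ∈ B → False)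

lemma partRet_mono {S T : Set α} {g : α → α} (hTS : T ⊆ S) (h : PartRet A B S g) :
    PartRet A B T g :=
  ⟨fun _ hx _ hy => h.1 (hTS hx) (hTS hy), fun x hx => h.2.1 x (hTS hx), h.2.2⟩

include hAL hBU hAB hABd in
lemma stepMin (a0 : α) (ha0 : a0 ∈ A) (b0 : α) (hb0 : b0 ∈ B)
    (S : Set α) (g : α → α) (x0 : α)
    (hx0L : x0 ∈ LSet α) (hx0Y : x0 ∉ YSet A B) (hx0S : x0 ∉ S)
    (hYS : YSet A B ⊆ S) (hST : S ⊆ YSet A B ∪ ESet α)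
    (hg : PartRet A B S g) :
    ∃ g', PartRet A B (insert x0 S) g' := by
  classical
  obtain ⟨hmono, hval, hfix⟩ := hg
  set g1 : α → α := fun v => if v ∈ USet α ∧ g v ∈ A then b0 else g v with hg1def
  have hg1val : ∀ x ∈ S, g1 x ∈ A ∪ B := by
    intro x hx
    by_cases h : x ∈ USet α ∧ g x ∈ A
    · simp only [hg1def, if_pos h]; exact Or.inr hb0
    · simp only [hg1def, if_neg h]; exact hval x hx
  have hg1fix : ∀ c ∈ A ∪ B, g1 c = c := by
    intro c hc
    have : ¬ (c ∈ USet α ∧ g c ∈ A) := by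
      rintro ⟨hcU, hcA⟩
      rw [hfix c hc] at hcA
      rcases hc with hc | hc
      · exact hABd c hc (by
          -- c ∈ A and c ∈ USet: use hAB with b0 : c < b0 but c ∈ USet gives b0 = c
          have := (hAB c hc b0 hb0)
          have := hcU b0 this.le
          exact (this ▸ hb0))
      · exact hABd c hcA hc
    simp only [hg1def, if_neg this]; exact hfix c hc
  have hg1mono : ∀ ⦃x⦄, x ∈ S → ∀ ⦃y⦄, y ∈ S → x ≤ y → g1 x ≤ g1 y := by
    intro x hx y hy hxy
    by_cases hpx : x ∈ USet α ∧ g x ∈ A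
    · have : y = x := hpx.1 y hxy
      subst this; exact le_refl _
    · simp only [hg1def, if_neg hpx]
      by_cases hpy : y ∈ USet α ∧ g y ∈ A
      · simp only [if_pos hpy]
        rcases hval x hx with h | h
        · exact (hAB _ h _ hb0).le
        · exfalso
          have h1 : g x ≤ g y := hmono hx hy hxy
          have h2 : g y = g x := (hBU h) _ h1
          exact hABd _ (h2 ▸ hpy.2) h
      · simp only [if_neg hpy]; exact hmono hx hy hxy
  refine ⟨fun z => if z = x0 then a0 else g1 z, ?_, ?_, ?_⟩
  · intro x hx y hy hxy
    rcases hx with rfl | hx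
    · rcases hy with rfl | hy
      · exact le_refl _
      · have hne : x ≠ y := by rintro rfl; exact hx0S hy
        simp only [if_pos rfl, if_neg (Ne.symm hne)]
        -- y ∈ USet and g1 y ∈ B
        have hyU : y ∈ USet α := by
          rcases hST hy with hyY | hyE
          · rcases Y_sub (fun c hc => by
              rcases hc with hc | hc
              exacts [Or.inl (hAL hc), Or.inr (hBU hc)]) hyY with hyE' | hyI
            · rcases hyE' with hyL | hyU
              · exact absurd (hyL _ hxy) hne
              · exact hyU
            · exact absurd (min_below_inner_mem hx0L hyI hxy) hx0Y
          · rcases hyE with hyL | hyU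
            · exact absurd (hyL _ hxy) hne
            · exact hyU
        have : g1 y ∈ B := by
          by_cases hpy : y ∈ USet α ∧ g y ∈ A
          · simp only [hg1def, if_pos hpy]; exact hb0
          · simp only [hg1def, if_neg hpy]
            rcases hval y hy with h | h
            · exact absurd ⟨hyU, h⟩ hpy
            · exact h
        exact (hAB _ ha0 _ this).le
    · rcases hy with rfl | hy
      · have : x = y := hx0L x hxy
        subst this; exact le_refl _
      · have hnex : x ≠ x0 := by rintro rfl; exact hx0S hx
        have hney : y ≠ x0 := by rintro rfl; exact hx0S hy
        simp only [if_neg hnex, if_neg hney]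
        exact hg1mono hx hy hxy
  · intro x hx
    rcases hx with rfl | hx
    · simp only [if_pos rfl]; exact Or.inl ha0
    · by_cases h : x = x0
      · subst h; simp only [if_pos rfl]; exact Or.inl ha0
      · simp only [if_neg h]; exact hg1val x hx
  · intro c hc
    have : c ≠ x0 := by rintro rfl; exact hx0Y (C_sub_Y hc)
    simp only [if_neg this]; exact hg1fix c hc

include hAL hBU hAB hABd in
lemma stepMax (a0 : α) (ha0 : a0 ∈ A) (b0 : α) (hb0 : b0 ∈ B)
    (S : Set α) (g : α → α) (x0 : α)
    (hx0U : x0 ∈ USet α) (hx0Y : x0 ∉ YSet A B) (hx0S : x0 ∉ S)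
    (hYS : YSet A B ⊆ S) (hST : S ⊆ YSet A B ∪ ESet α)
    (hg : PartRet A B S g) :
    ∃ g', PartRet A B (insert x0 S) g' := by
  classical
  obtain ⟨hmono, hval, hfix⟩ := hg
  set g1 : α → α := fun v => if v ∈ LSet α ∧ g v ∈ B then a0 else g v with hg1def
  have hg1val : ∀ x ∈ S, g1 x ∈ A ∪ B := by
    intro x hx
    by_cases h : x ∈ LSet α ∧ g x ∈ B
    · simp only [hg1def, if_pos h]; exact Or.inl ha0
    · simp only [hg1def, if_neg h]; exact hval x hx
  have hg1fix : ∀ c ∈ A ∪ B, g1 c = c := by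
    intro c hc
    have : ¬ (c ∈ LSet α ∧ g c ∈ B) := by
      rintro ⟨hcL, hcB⟩
      rw [hfix c hc] at hcB
      rcases hc with hc | hc
      · exact hABd c hc hcB
      · have := hAB a0 ha0 c hc
        have := hcL a0 this.le
        rw [this] at ha0
        exact hABd c ha0 hc
    simp only [hg1def, if_neg this]; exact hfix c hc
  have hg1mono : ∀ ⦃x⦄, x ∈ S → ∀ ⦃y⦄, y ∈ S → x ≤ y → g1 x ≤ g1 y := by
    intro x hx y hy hxy
    by_cases hpy : y ∈ LSet α ∧ g y ∈ B
    · have : x = y := hpy.1 x hxy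
      subst this; exact le_refl _
    · simp only [hg1def, if_neg hpy]
      by_cases hpx : x ∈ LSet α ∧ g x ∈ B
      · simp only [if_pos hpx]
        rcases hval y hy with h | h
        · exfalso
          have h1 : g x ≤ g y := hmono hx hy hxy
          have h2 : g y = g x := (hBU hpx.2) _ h1
          exact hABd _ (h2 ▸ h) hpx.2
        · exact (hAB _ ha0 _ h).le
      · simp only [if_neg hpx]; exact hmono hx hy hxy
  refine ⟨fun z => if z = x0 then b0 else g1 z, ?_, ?_, ?_⟩
  · intro x hx y hy hxy
    rcases hy with rfl | hy
    · rcases hx with rfl | hx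
      · exact le_refl _
      · have hne : x ≠ y := by rintro rfl; exact hx0S hx
        simp only [if_pos rfl, if_neg hne]
        have hxL : x ∈ LSet α := by
          rcases hST hx with hxY | hxE
          · rcases Y_sub (fun c hc => by
              rcases hc with hc | hc
              exacts [Or.inl (hAL hc), Or.inr (hBU hc)]) hxY with hxE' | hxI
            · rcases hxE' with hxL | hxU
              · exact hxL
              · exact absurd (hxU _ hxy) (Ne.symm hne)
            · exact absurd (max_above_inner_mem hx0U hxI hxy) hx0Y
          · rcases hxE with hxL | hxU
            · exact hxL
            · exact absurd (hxU _ hxy) (Ne.symm hne)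
        have : g1 x ∈ A := by
          by_cases hpx : x ∈ LSet α ∧ g x ∈ B
          · simp only [hg1def, if_pos hpx]; exact ha0
          · simp only [hg1def, if_neg hpx]
            rcases hval x hx with h | h
            · exact h
            · exact absurd ⟨hxL, h⟩ hpx
        exact (hAB _ this _ hb0).le
    · rcases hx with rfl | hx
      · have : y = x := hx0U y hxy
        subst this; exact le_refl _
      · have hnex : x ≠ x0 := by rintro rfl; exact hx0S hx
        have hney : y ≠ x0 := by rintro rfl; exact hx0S hy
        simp only [if_neg hnex, if_neg hney]
        exact hg1mono hx hy hxy
  · intro x hx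
    rcases hx with rfl | hx
    · simp only [if_pos rfl]; exact Or.inr hb0
    · by_cases h : x = x0
      · subst h; simp only [if_pos rfl]; exact Or.inr hb0
      · simp only [if_neg h]; exact hg1val x hx
  · intro c hc
    have : c ≠ x0 := by rintro rfl; exact hx0Y (C_sub_Y hc)
    simp only [if_neg this]; exact hg1fix c hc

end Steps

section InnerStep
set_option linter.unusedSectionVars false
set_option maxHeartbeats 800000
variable {α : Type*} [Fintype α] [PartialOrder α]
variable {A B : Set α} (hAL : A ⊆ LSet α) (hBU : B ⊆ USet α)
  (hAB : ∀ a ∈ A, ∀ b ∈ B, a < b) (hABd : ∀ x, x ∈ A → x ∈ B → False)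

include hAL hBU hAB hABd in
lemma stepInner (S : Set α) (g : α → α) (x0 : α)
    (hx0E : x0 ∉ ESet α) (hx0Y : x0 ∉ YSet A B) (hx0S : x0 ∉ S)
    (hES : YSet A B ∪ ESet α ⊆ S)
    (hg : PartRet A B S g) :
    ∃ g', PartRet A B (insert x0 S) g' := by
  classical
  obtain ⟨hmono, hval, hfix⟩ := hg
  have hE_S : ESet α ⊆ S := fun z hz => hES (Or.inr hz)
  -- a minimal point strictly below x0 and a maximal point strictly above
  obtain ⟨ζ, hζL, hζx⟩ := exists_min_le x0
  obtain ⟨ν, hνU, hxν⟩ := exists_max_ge x0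
  have hζne : ζ ≠ x0 := by rintro rfl; exact hx0E (Or.inl hζL)
  have hνne : ν ≠ x0 := by rintro rfl; exact hx0E (Or.inr hνU)
  have hζS : ζ ∈ S := hE_S (Or.inl hζL)
  have hνS : ν ∈ S := hE_S (Or.inr hνU)
  -- generic: a value for x0 such that lowers map ≤ it and it ≤ uppers' values
  suffices h : ∃ c, c ∈ A ∪ B ∧ (∀ u ∈ S, u ≤ x0 → u ≠ x0 → g u ≤ c) ∧
      (∀ y ∈ S, x0 ≤ y → y ≠ x0 → c ≤ g y) by
    obtain ⟨c, hcC, hlo, hup⟩ := h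
    refine ⟨fun z => if z = x0 then c else g z, ?_, ?_, ?_⟩
    · intro x hx y hy hxy
      rcases hx with rfl | hx
      · rcases hy with rfl | hy
        · exact le_refl _
        · have hne : y ≠ x := by rintro rfl; exact hx0S hy
          simp only [if_pos rfl, if_neg hne]
          exact hup y hy hxy hne
      · rcases hy with rfl | hy
        · have hne : x ≠ y := by rintro rfl; exact hx0S hx
          simp only [if_pos rfl, if_neg hne]
          exact hlo x hx hxy hne
        · have hnex : x ≠ x0 := by rintro rfl; exact hx0S hx
          have hney : y ≠ x0 := by rintro rfl; exact hx0S hy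
          simp only [if_neg hnex, if_neg hney]
          exact hmono hx hy hxy
    · intro x hx
      rcases hx with rfl | hx
      · simp only [if_pos rfl]; exact hcC
      · by_cases h : x = x0
        · subst h; simp only [if_pos rfl]; exact hcC
        · simp only [if_neg h]; exact hval x hx
    · intro c' hc'
      have : c' ≠ x0 := by rintro rfl; exact hx0Y (C_sub_Y hc')
      simp only [if_neg this]; exact hfix c' hc'
  -- now the case analysis
  rcases dich (A := A) (B := B) hx0E hx0Y with hL | hU
  · -- unique minimal point below x0
    have hζall : ∀ u, u ≤ x0 → ζ ≤ u := by
      intro u hu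
      obtain ⟨m, hmL, hmu⟩ := exists_min_le u
      have : m = ζ := hL m ζ hmL hζL (hmu.trans hu) hζx
      exact this ▸ hmu
    by_cases hBlo : ∃ u ∈ S, u ≤ x0 ∧ u ≠ x0 ∧ g u ∈ B
    · obtain ⟨u0, hu0S, hu0x, hu0ne, hu0B⟩ := hBlo
      refine ⟨g u0, Or.inr hu0B, ?_, ?_⟩
      · intro u hu hux hune
        rcases hval u hu with h | h
        · exact (hAB _ h _ hu0B).le
        · -- both B-valued lowers: equal via the maximal point ν above x0
          have h1 : g u ≤ g ν := hmono hu hνS (hux.trans hxν)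
          have h2 : g u0 ≤ g ν := hmono hu0S hνS (hu0x.trans hxν)
          have e1 : g ν = g u := (hBU h) _ h1
          have e2 : g ν = g u0 := (hBU hu0B) _ h2
          exact (e1.symm.trans e2).le
      · intro y hy hxy hyne
        have h2 : g u0 ≤ g y := hmono hu0S hy (hu0x.trans hxy)
        exact h2
    · push_neg at hBlo
      have hζA : g ζ ∈ A := by
        rcases hval ζ hζS with h | h
        · exact h
        · exact absurd h (hBlo ζ hζS hζx hζne)
      refine ⟨g ζ, Or.inl hζA, ?_, ?_⟩
      · intro u hu hux hune
        have huA : g u ∈ A := by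
          rcases hval u hu with h | h
          · exact h
          · exact absurd h (hBlo u hu hux hune)
        have h1 : g ζ ≤ g u := hmono hζS hu (hζall u hux)
        have : g ζ = g u := (hAL huA) _ h1
        exact this.ge
      · intro y hy hxy hyne
        exact hmono hζS hy (hζx.trans hxy)
  · -- unique maximal point above x0
    have hνall : ∀ y, x0 ≤ y → y ≤ ν := by
      intro y hy
      obtain ⟨w, hwU, hyw⟩ := exists_max_ge y
      have : w = ν := hU w ν hwU hνU (hy.trans hyw) hxν
      exact this ▸ hyw
    by_cases hAup : ∃ y ∈ S, x0 ≤ y ∧ y ≠ x0 ∧ g y ∈ A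
    · obtain ⟨y0, hy0S, hy0x, hy0ne, hy0A⟩ := hAup
      refine ⟨g y0, Or.inl hy0A, ?_, ?_⟩
      · intro u hu hux hune
        have h1 : g u ≤ g y0 := hmono hu hy0S (hux.trans hy0x)
        exact h1
      · intro y hy hxy hyne
        rcases hval y hy with h | h
        · -- both A-valued uppers: equal via the minimal point ζ below x0
          have h1 : g ζ ≤ g y := hmono hζS hy (hζx.trans hxy)
          have h2 : g ζ ≤ g y0 := hmono hζS hy0S (hζx.trans hy0x)
          have hζA : g ζ ∈ A := by
            rcases hval ζ hζS with h' | h'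
            · exact h'
            · exfalso
              have e : g y = g ζ := (hBU h') _ h1
              exact hABd _ (e ▸ h) h'
          have e1 : g ζ = g y := (hAL h) _ h1
          have e2 : g ζ = g y0 := (hAL hy0A) _ h2
          exact (e2.symm.trans e1).le
        · exact (hAB _ hy0A _ h).le
    · push_neg at hAup
      have hνx : x0 ≤ ν := hxν
      have hνB : g ν ∈ B := by
        rcases hval ν hνS with h | h
        · exact absurd h (hAup ν hνS hxν hνne)
        · exact h
      refine ⟨g ν, Or.inr hνB, ?_, ?_⟩
      · intro u hu hux hune
        exact hmono hu hνS (hux.trans hxν)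
      · intro y hy hxy hyne
        have hyB : g y ∈ B := by
          rcases hval y hy with h | h
          · exact absurd h (hAup y hy hxy hyne)
          · exact h
        have h1 : g y ≤ g ν := hmono hy hνS (hνall y hxy)
        have : g ν = g y := (hBU hyB) _ h1
        exact this.le

end InnerStep

section Fill
set_option linter.unusedSectionVars false
variable {α : Type*} [Fintype α] [PartialOrder α] {A B : Set α}

lemma fill (L T : Set α)
    (step : ∀ (S : Set α) (g : α → α) (x0 : α), L ⊆ S → S ⊆ T → x0 ∈ T → x0 ∉ S →
      PartRet A B S g → ∃ g', PartRet A B (insert x0 S) g') :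
    ∀ (n : ℕ) (S : Set α) (g : α → α), (T \ S).ncard ≤ n → L ⊆ S → S ⊆ T →
      PartRet A B S g → ∃ g', PartRet A B T g' := by
  intro n
  induction n with
  | zero =>
    intro S g hc hLS hST hg
    have hempty : T \ S = ∅ := by
      rw [← Set.ncard_eq_zero (Set.toFinite _)]
      omega
    exact ⟨g, partRet_mono (Set.diff_eq_empty.mp hempty) hg⟩
  | succ n ih =>
    intro S g hc hLS hST hg
    by_cases hTS : T ⊆ S
    · exact ⟨g, partRet_mono hTS hg⟩
    · obtain ⟨x0, hx0T, hx0S⟩ := Set.not_subset.mp hTS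
      obtain ⟨g', hg'⟩ := step S g x0 hLS hST hx0T hx0S hg
      refine ih (insert x0 S) g' ?_ (hLS.trans (Set.subset_insert _ _))
        (Set.insert_subset hx0T hST) hg'
      have heq : T \ insert x0 S = (T \ S) \ {x0} := by
        ext z; simp only [Set.mem_diff, Set.mem_insert_iff, Set.mem_singleton_iff]
        tauto
      have hlt : ((T \ S) \ {x0}).ncard < (T \ S).ncard :=
        Set.ncard_diff_singleton_lt_of_mem ⟨hx0T, hx0S⟩ (Set.toFinite _)
      rw [heq]; omega

end Fill


theorem stmt19 {α : Type*} [Fintype α] [PartialOrder α]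
    (hiso : NoIsolated α) (A B : Set α) (hA : A.Nonempty) (hB : B.Nonempty)
    (hAL : A ⊆ LSet α) (hBU : B ⊆ USet α)
    (hAE : A ∪ B ⊆ ESet α) (hAB : ∀ a ∈ A, ∀ b ∈ B, a < b) :
    IsRetract α (A ∪ B) ↔
      IsRetractIn (⋃₀ bundles α ∪ innerPts α ∪ (A ∪ B)) (A ∪ B) := by
  classical
  obtain ⟨a0, ha0⟩ := hA
  obtain ⟨b0, hb0⟩ := hB
  have hABd : ∀ x, x ∈ A → x ∈ B → False := by
    intro x hxA hxB
    obtain ⟨y, hy | hy⟩ := hiso x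
    · exact hy.ne' ((hBU hxB) y hy.le)
    · exact hy.ne ((hAL hxA) y hy.le)
  show IsRetract α (A ∪ B) ↔ IsRetractIn (YSet A B) (A ∪ B)
  constructor
  · rintro ⟨f, hfm, hfi, hfr⟩
    have hfC : ∀ x, f x ∈ A ∪ B := fun x => hfr ▸ Set.mem_range_self x
    have hffix : ∀ c ∈ A ∪ B, f c = c := by
      intro c hc
      rw [← hfr] at hc
      obtain ⟨w, rfl⟩ := hc
      exact hfi w
    refine ⟨fun y => ⟨f ↑y, C_sub_Y (hfC ↑y)⟩, ?_, ?_, ?_⟩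
    · intro y1 y2 h
      exact Subtype.mk_le_mk.mpr (hfm (Subtype.coe_le_coe.mpr h))
    · intro y
      exact Subtype.ext (hfi ↑y)
    · ext y
      constructor
      · rintro ⟨w, rfl⟩
        exact hfC ↑w
      · intro hy
        exact ⟨y, Subtype.ext (hffix ↑y hy)⟩
  · rintro ⟨r, hrm, hri, hrr⟩
    set g0 : α → α := fun x => if h : x ∈ YSet A B then ↑(r ⟨x, h⟩) else x with hg0def
    have hg0coe : ∀ (x : α) (h : x ∈ YSet A B), g0 x = ↑(r ⟨x, h⟩) := by
      intro x h; simp only [hg0def, dif_pos h]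
    have hPart0 : PartRet A B (YSet A B) g0 := by
      refine ⟨?_, ?_, ?_⟩
      · intro x hx y hy hxy
        rw [hg0coe x hx, hg0coe y hy]
        exact Subtype.coe_le_coe.mpr (hrm (Subtype.mk_le_mk.mpr hxy))
      · intro x hx
        rw [hg0coe x hx]
        have : r ⟨x, hx⟩ ∈ Set.range r := Set.mem_range_self _
        rw [hrr] at this
        exact this
      · intro c hc
        have hcY : c ∈ YSet A B := C_sub_Y hc
        rw [hg0coe c hcY]
        have : (⟨c, hcY⟩ : YSet A B) ∈ Set.range r := by rw [hrr]; exact hc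
        obtain ⟨w, hw⟩ := this
        have : r ⟨c, hcY⟩ = ⟨c, hcY⟩ := by rw [← hw, hri]
        rw [this]
    have step1 : ∀ (S : Set α) (g : α → α) (x0 : α), YSet A B ⊆ S → S ⊆ YSet A B ∪ ESet α →
        x0 ∈ YSet A B ∪ ESet α → x0 ∉ S → PartRet A B S g →
        ∃ g', PartRet A B (insert x0 S) g' := by
      intro S g x0 hYS hST hx0T hx0S hg
      have hx0Y : x0 ∉ YSet A B := fun h => hx0S (hYS h)
      have hx0E : x0 ∈ ESet α := by
        rcases hx0T with h | h
        · exact absurd h hx0Y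
        · exact h
      rcases hx0E with hx0L | hx0U
      · exact stepMin hAL hBU hAB hABd a0 ha0 b0 hb0 S g x0 hx0L hx0Y hx0S hYS hST hg
      · exact stepMax hAL hBU hAB hABd a0 ha0 b0 hb0 S g x0 hx0U hx0Y hx0S hYS hST hg
    obtain ⟨g1, hg1⟩ := fill (YSet A B) (YSet A B ∪ ESet α) step1
      ((YSet A B ∪ ESet α) \ YSet A B).ncard (YSet A B) g0 le_rfl
      subset_rfl Set.subset_union_left hPart0
    have step2 : ∀ (S : Set α) (g : α → α) (x0 : α), YSet A B ∪ ESet α ⊆ S → S ⊆ Set.univ →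
        x0 ∈ Set.univ → x0 ∉ S → PartRet A B S g →
        ∃ g', PartRet A B (insert x0 S) g' := by
      intro S g x0 hLS hST _ hx0S hg
      have hx0Y : x0 ∉ YSet A B := fun h => hx0S (hLS (Or.inl h))
      have hx0E : x0 ∉ ESet α := fun h => hx0S (hLS (Or.inr h))
      exact stepInner hAL hBU hAB hABd S g x0 hx0E hx0Y hx0S hLS hg
    obtain ⟨g2, hg2⟩ := fill (YSet A B ∪ ESet α) Set.univ step2
      (Set.univ \ (YSet A B ∪ ESet α)).ncard
      (YSet A B ∪ ESet α) g1 le_rfl subset_rfl (Set.subset_univ _) hg1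
    refine ⟨g2, ?_, ?_, ?_⟩
    · intro x y hxy
      exact hg2.1 (Set.mem_univ x) (Set.mem_univ y) hxy
    · intro x
      exact hg2.2.2 _ (hg2.2.1 x (Set.mem_univ x))
    · ext z
      constructor
      · rintro ⟨w, rfl⟩
        exact hg2.2.1 w (Set.mem_univ w)
      · intro hz
        exact ⟨z, hg2.2.2 z hz⟩
end
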